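/- arXiv:2208.09276 — 10 statements merged into one kernel-verified Lean document; each statement's English description precedes it below -/
import Mathlib

section
/- The set of pairs {x, -x} for x ranging over G \ H (taking each pair once) is a frame starter in G \ H if and only if every element of G \ H has odd order. -/
open scoped Classical

variable {G : Type*} [AddCommGroup G]

/-- The multiset of all elements appearing in the pairs of `S`. -/
def starterElems (S : Finset (G × G)) : Multiset G :=
  S.val.bind fun p => {p.1, p.2}

/-- The multiset of all differences `±(x - y)` arising from the pairs of `S`. -/
def starterDiffs (S : Finset (G × G)) : Multiset G :=
  S.val.bind fun p => {p.1 - p.2, p.2 - p.1}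

/-- `S` is a frame starter in `G \ H`: its pairs partition `G \ H` and its
differences `±(x - y)` enumerate each element of `G \ H` exactly once. -/
def IsFrameStarter (H : AddSubgroup G) (S : Finset (G × G)) : Prop :=
  (∀ z : G, (starterElems S).count z = if z ∈ H then 0 else 1) ∧
  (∀ z : G, (starterDiffs S).count z = if z ∈ H then 0 else 1)

/-- A frame starter is strong if the pair sums are pairwise distinct and avoid `H`. -/
def IsStrongFrameStarter (H : AddSubgroup G) (S : Finset (G × G)) : Prop :=
  IsFrameStarter H S ∧
  (∀ p ∈ S, p.1 + p.2 ∉ H) ∧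
  (∀ p ∈ S, ∀ q ∈ S, p.1 + p.2 = q.1 + q.2 → p = q)

/-!
For a patterned starter the pair `{x, -x}` has differences `±2x`, so the differences are the
doubles of the elements; once the elements are `G \ H`, being a frame starter says exactly that
doubling permutes `G \ H`. If `x ∉ H` had even order `2m`, then `y = m • x` has order two, and
either `y ∉ H` although `2y = 0 ∈ H`, or `y ∈ H` and `x ≠ x + y` lie outside `H` with the same
double. Conversely, an element of odd order `2t + 1` is `t + 1` times its double, and two
elements of odd order with the same double differ by an element of odd order killed by `2`.
The pairs come from choosing one element of each `{x, -x}`, and `x ≠ -x` because `2x ∉ H`.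
-/

theorem Finset.count_map_val_eq_ite_iff_bijOn {α β : Type*} {f : α → β} {s : Finset α}
    {t : Set β} :
    (∀ z, (s.val.map f).count z = if z ∈ t then 1 else 0) ↔ Set.BijOn f s t := by
  constructor
  · intro h
    have hnodup : (s.val.map f).Nodup :=
      Multiset.nodup_iff_count_le_one.2 fun z => by rw [h z]; split_ifs <;> omega
    have hmem : ∀ z, z ∈ s.val.map f ↔ z ∈ t := fun z => by
      rw [← Multiset.count_pos, h z]; split_ifs <;> simp [*]
    refine ⟨fun x hx => (hmem _).1 (Multiset.mem_map_of_mem f hx),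
      fun x hx y hy => Multiset.inj_on_of_nodup_map hnodup x hx y hy, fun z hz => ?_⟩
    obtain ⟨x, hx, rfl⟩ := Multiset.mem_map.1 ((hmem z).2 hz)
    exact ⟨x, hx, rfl⟩
  · intro h z
    have hnodup := Multiset.Nodup.map_on (fun x hx y hy => h.injOn hx hy) s.nodup
    have hmem : z ∈ s.val.map f ↔ z ∈ t := by rw [← h.image_eq]; simp
    rw [Multiset.count_eq_of_nodup hnodup]
    simp only [hmem]

theorem AddSubgroup.mem_of_two_nsmul_mem {A : Type*} [AddGroup A] {H : AddSubgroup A} {x : A}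
    (hx : Odd (addOrderOf x)) (h : 2 • x ∈ H) : x ∈ H := by
  obtain ⟨t, ht⟩ := hx
  have hhalf : (t + 1) • 2 • x = x := by
    rw [smul_smul, show (t + 1) * 2 = addOrderOf x + 1 by omega, succ_nsmul,
      addOrderOf_nsmul_eq_zero, zero_add]
  exact hhalf ▸ H.nsmul_mem h (t + 1)

theorem eq_of_two_nsmul_eq_of_odd_addOrderOf {x y : G} (hx : Odd (addOrderOf x))
    (hy : Odd (addOrderOf y)) (h : 2 • x = 2 • y) : x = y := by
  have hodd : Odd (addOrderOf (x - y)) := by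
    refine (hx.mul (addOrderOf_neg y ▸ hy)).of_dvd_nat ?_
    rw [sub_eq_add_neg]
    exact (AddCommute.all x (-y)).addOrderOf_add_dvd_mul_addOrderOf
  have htwo : addOrderOf (x - y) ∣ 2 :=
    addOrderOf_dvd_of_nsmul_eq_zero (by rw [nsmul_sub, h, sub_self])
  have hone : addOrderOf (x - y) = 1 := Nat.Coprime.eq_one_of_dvd hodd.coprime_two_right htwo
  exact sub_eq_zero.1 (AddMonoid.addOrderOf_eq_one_iff.1 hone)

theorem bijOn_two_nsmul_compl_iff [Finite G] (H : AddSubgroup G) :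
    Set.BijOn (fun x : G => 2 • x) (H : Set G)ᶜ (H : Set G)ᶜ ↔
      ∀ x ∉ H, Odd (addOrderOf x) := by
  constructor
  · intro h x hx
    by_contra heven
    obtain ⟨m, hm⟩ := Nat.not_odd_iff_even.1 heven
    have hm0 : m ≠ 0 := by have := addOrderOf_pos x; omega
    -- `m • x` is an element of order two
    have hy : m • x ≠ 0 := nsmul_ne_zero_of_lt_addOrderOf hm0 (by omega)
    have h2y : 2 • m • x = 0 := by
      rw [smul_smul, two_mul, ← hm, addOrderOf_nsmul_eq_zero]
    by_cases hyH : m • x ∈ H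
    · have hxy : x + m • x ∉ H := fun hmem => hx (by simpa using H.sub_mem hmem hyH)
      have := h.injOn hxy hx (by simp only [nsmul_add, h2y, add_zero])
      exact hy (by simpa using this)
    · exact h.mapsTo hyH (h2y ▸ H.zero_mem)
  · intro hodd
    have hmaps : Set.MapsTo (fun x : G => 2 • x) (H : Set G)ᶜ (H : Set G)ᶜ :=
      fun x hx hmem => hx (AddSubgroup.mem_of_two_nsmul_mem (hodd x hx) hmem)
    refine ((Set.toFinite _).injOn_iff_bijOn_of_mapsTo hmaps).1 fun x hx y hy hxy => ?_
    exact eq_of_two_nsmul_eq_of_odd_addOrderOf (hodd x hx) (hodd y hy) hxy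

theorem starterDiffs_eq_map_two_nsmul {S : Finset (G × G)} (hS : ∀ p ∈ S, p.2 = -p.1) :
    starterDiffs S = (starterElems S).map (2 • ·) := by
  rw [starterDiffs, starterElems, Multiset.map_bind]
  refine Multiset.bind_congr fun p hp => ?_
  simp [hS p hp, two_nsmul, sub_eq_add_neg]

theorem forall_count_starterElems_eq_ite_iff [Fintype G] {H : AddSubgroup G}
    {S : Finset (G × G)} :
    (∀ z, (starterElems S).count z = if z ∈ H then 0 else 1) ↔
      starterElems S = (Finset.univ.filter (· ∉ H)).val := by
  rw [Multiset.ext]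
  refine forall_congr' fun z => ?_
  rw [Multiset.count_eq_of_nodup (Finset.nodup _)]
  simp [ite_not]

theorem isFrameStarter_iff_of_patterned [Fintype G] {H : AddSubgroup G} {S : Finset (G × G)}
    (hS : ∀ p ∈ S, p.2 = -p.1) :
    IsFrameStarter H S ↔ starterElems S = (Finset.univ.filter (· ∉ H)).val ∧
      Set.BijOn (fun x : G => 2 • x) (H : Set G)ᶜ (H : Set G)ᶜ := by
  rw [IsFrameStarter, forall_count_starterElems_eq_ite_iff, starterDiffs_eq_map_two_nsmul hS]
  refine and_congr_right fun hE => ?_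
  have hcompl : ((Finset.univ.filter (· ∉ H) : Finset G) : Set G) = (H : Set G)ᶜ := by ext; simp
  rw [hE, ← hcompl, ← Finset.count_map_val_eq_ite_iff_bijOn]
  simp [ite_not]

theorem exists_patterned_starterElems_eq (s : Finset G) (hneg : ∀ x ∈ s, -x ∈ s)
    (hfix : ∀ x ∈ s, -x ≠ x) :
    ∃ S : Finset (G × G), (∀ p ∈ S, p.2 = -p.1) ∧ starterElems S = s.val := by
  -- keep, of each pair `{x, -x}`, the element that comes first in a well-order of `G`
  set T := s.filter fun x => WellOrderingRel x (-x)
  refine ⟨T.map ⟨fun x => (x, -x), fun a b h => congrArg Prod.fst h⟩,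
    fun p hp => by obtain ⟨x, -, rfl⟩ := Finset.mem_map.1 hp; rfl, ?_⟩
  have hnegT : T.val.map Neg.neg = (s.filter fun x => ¬WellOrderingRel x (-x)).val := by
    change (T.map (Equiv.neg G).toEmbedding).val = _
    congr 1
    ext y
    simp only [T, Finset.mem_map_equiv, Equiv.neg_symm, Equiv.neg_apply, Finset.mem_filter,
      neg_neg]
    constructor
    · rintro ⟨hy, hlt⟩
      exact ⟨neg_neg y ▸ hneg _ hy, fun hgt => asymm hlt hgt⟩
    · rintro ⟨hy, hnlt⟩
      refine ⟨hneg y hy, ?_⟩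
      rcases trichotomous_of WellOrderingRel y (-y) with hlt | heq | hgt
      exacts [absurd hlt hnlt, absurd heq.symm (hfix y hy), hgt]
  calc starterElems (T.map _)
      = T.val + T.val.map Neg.neg := by
        simp only [starterElems, Finset.map_val, Multiset.insert_eq_cons, ← Multiset.singleton_add,
          Multiset.bind_add, Multiset.bind_singleton, Multiset.map_map]
        exact congrArg (· + _) (Multiset.map_id' _)
    _ = s.val := by rw [hnegT]; exact Multiset.filter_add_not _ _

theorem stmt_5 [Fintype G] (H : AddSubgroup G) :
    (∃ S : Finset (G × G), (∀ p ∈ S, p.2 = -p.1) ∧ IsFrameStarter H S) ↔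
      ∀ x : G, x ∉ H → Odd (addOrderOf x) := by
  rw [← bijOn_two_nsmul_compl_iff]
  constructor
  · rintro ⟨S, hS, hFS⟩
    exact ((isFrameStarter_iff_of_patterned hS).1 hFS).2
  · intro hbij
    have hfix : ∀ x ∈ Finset.univ.filter (· ∉ H), -x ≠ x := fun x hx hx' =>
      hbij.mapsTo (by simpa using hx)
        (by rw [two_nsmul, neg_eq_iff_add_eq_zero.1 hx']; exact H.zero_mem)
    obtain ⟨S, hS, hE⟩ := exists_patterned_starterElems_eq _ (by simp) hfix
    exact ⟨S, hS, (isFrameStarter_iff_of_patterned hS).2 ⟨hE, hbij⟩⟩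
end

section
/- If G is a finite abelian group of odd order and H is a subgroup, then there exists a frame starter in G \ H, namely the patterned one consisting of the pairs {x, -x} for x ∈ G \ H. -/
/-!
In a group of order `2k + 1` doubling is a bijection with inverse `z ↦ -(k • z)`, and it maps
`H` onto `H`; in particular `x ≠ -x` off `H`. So `G \ H` splits into pairs `{x, -x}`, and
choosing one representative `x` of each gives pairs whose differences `±(x - (-x)) = ±2x` are
the doubles of the elements of `G \ H`, i.e. `G \ H` itself once more.
-/

open scoped Classical

variable {G : Type*} [AddCommGroup G]

section OddOrder

variable {k : ℕ}

theorem neg_nsmul_add_self (hk : Nat.card G = 2 * k + 1) (x : G) : -(k • (x + x)) = x := by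
  have hzero : (2 * k + 1) • x = 0 := hk ▸ card_nsmul_eq_zero'
  rw [neg_eq_iff_eq_neg, ← add_eq_zero_iff_eq_neg, ← two_nsmul, ← mul_nsmul, ← succ_nsmul, hzero]

theorem neg_nsmul_add_neg_nsmul (hk : Nat.card G = 2 * k + 1) (z : G) :
    -(k • z) + -(k • z) = z := by
  rw [← neg_add, ← nsmul_add, neg_nsmul_add_self hk]

theorem add_self_injective (hk : Nat.card G = 2 * k + 1) :
    Function.Injective fun x : G => x + x :=
  Function.LeftInverse.injective (g := fun z => -(k • z)) (neg_nsmul_add_self hk)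

theorem add_self_mem_iff (hk : Nat.card G = 2 * k + 1) {H : AddSubgroup G} {x : G} :
    x + x ∈ H ↔ x ∈ H :=
  ⟨fun h => neg_nsmul_add_self hk x ▸ H.neg_mem (H.nsmul_mem h k), fun h => H.add_mem h h⟩

theorem ne_neg_of_notMem (hk : Nat.card G = 2 * k + 1) {H : AddSubgroup G} {x : G}
    (hx : x ∉ H) : x ≠ -x := fun h =>
  hx ((add_self_mem_iff hk).1 (by rw [add_eq_zero_iff_eq_neg.2 h]; exact H.zero_mem))

end OddOrder

def negPairs (T : Finset G) : Finset (G × G) :=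
  T.map ⟨fun x => (x, -x), fun _ _ h => (Prod.mk.inj h).1⟩

theorem snd_eq_neg_fst_of_mem_negPairs {T : Finset G} {p : G × G} (hp : p ∈ negPairs T) :
    p.2 = -p.1 := by
  obtain ⟨x, -, rfl⟩ := Finset.mem_map.1 hp
  rfl

theorem starterElems_negPairs (T : Finset G) :
    starterElems (negPairs T) = T.val + T.val.map Neg.neg := by
  simp only [starterElems, negPairs, Finset.map_val, Multiset.insert_eq_cons,
    ← Multiset.singleton_add, Multiset.bind_add, Multiset.bind_singleton, Multiset.map_map]
  exact congrArg₂ _ (Multiset.map_id _) rfl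

theorem starterDiffs_eq_map_add_self {S : Finset (G × G)} (hS : ∀ p ∈ S, p.2 = -p.1) :
    starterDiffs S = (starterElems S).map fun x => x + x := by
  rw [starterDiffs, starterElems, Multiset.map_bind]
  refine Multiset.bind_congr fun p hp => ?_
  rw [hS p hp]
  simp only [Multiset.insert_eq_cons, Multiset.map_cons, Multiset.map_singleton, sub_eq_add_neg,
    neg_neg]

theorem exists_count_starterElems_negPairs [Fintype G] (H : AddSubgroup G)
    (hH : ∀ x ∉ H, x ≠ -x) :
    ∃ T : Finset G, ∀ z, (starterElems (negPairs T)).count z = if z ∈ H then 0 else 1 := by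
  let e := Fintype.equivFin G
  set T := Finset.univ.filter fun x => x ∉ H ∧ e x < e (-x)
  have hcount (z : G) : T.val.count z = if z ∉ H ∧ e z < e (-z) then 1 else 0 := by
    simp only [Multiset.count_eq_of_nodup T.nodup, Finset.mem_val, T, Finset.mem_filter,
      Finset.mem_univ, true_and]
  refine ⟨T, fun z => ?_⟩
  rw [starterElems_negPairs, Multiset.count_add, ← neg_neg z,
    Multiset.count_map_eq_count' _ _ neg_injective, neg_neg, hcount, hcount, H.neg_mem_iff]
  by_cases hz : z ∈ H
  · simp [hz]
  · rcases (e.injective.ne (hH z hz)).lt_or_gt with h | h <;> simp [hz, h, h.not_gt]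

theorem stmt_6 [Fintype G] (H : AddSubgroup G)
    (hodd : Odd (Nat.card G)) :
    ∃ S : Finset (G × G), (∀ p ∈ S, p.2 = -p.1) ∧ IsFrameStarter H S := by
  obtain ⟨k, hk⟩ := hodd
  obtain ⟨T, hT⟩ := exists_count_starterElems_negPairs H fun x => ne_neg_of_notMem hk
  have hneg : ∀ p ∈ negPairs T, p.2 = -p.1 := fun _ => snd_eq_neg_fst_of_mem_negPairs
  refine ⟨negPairs T, hneg, hT, fun z => ?_⟩
  rw [starterDiffs_eq_map_add_self hneg, ← neg_nsmul_add_neg_nsmul hk z,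
    Multiset.count_map_eq_count' _ _ (add_self_injective hk), hT, add_self_mem_iff hk]
end

section
/- Suppose G is an abelian group of order 2u with a subgroup H of order 2t, where t is odd and u/t ≡ 3 (mod 4). Then there is no frame starter in G \ H. -/
open scoped Classical

variable {G : Type*} [AddCommGroup G]

/-! Let `A = {z | u • z = 0}`. For a finite abelian group of order `2w` with `w` odd and `w ∣ u`,
the image of `z ↦ u • z` is killed by `2`, so its order is prime to `w` and divides `2`, and it
contains every involution (which `u •` fixes); hence `A` has index 2 in `G` and `A ⊓ H` has index 2
in `H`, and `G \ H` has exactly `u - t` elements outside `A`. Count these elements in a starter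
twice: among the pairs and among the differences. As `x - y ∉ A` iff exactly one of `x, y` lies
outside `A`, a pair with both entries outside `A` contributes `2` and `0`, a pair with one entry
outside `A` contributes `1` and `2`. Equality of the two totals forces `4 ∣ u - t`, but
`u - t = t (u/t - 1) ≡ 2 (mod 4)`. -/

open Finset

section IndexTwo

variable {K : Type*} [AddCommGroup K]

lemma index_ker_nsmul_eq_two [Finite K] {v w : ℕ} (hcard : Nat.card K = 2 * w) (hw : Odd w)
    (hv : Odd v) (hdvd : w ∣ v) : (nsmulAddMonoidHom v : K →+ K).ker.index = 2 := by
  rw [AddSubgroup.index_ker]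
  set R := (nsmulAddMonoidHom v : K →+ K).range
  have hR_two : ∀ y : R, 2 • y = 0 := by
    rintro ⟨_, x, rfl⟩
    obtain ⟨c, rfl⟩ := hdvd
    ext
    simp only [AddSubgroup.coe_nsmul, nsmulAddMonoidHom_apply, AddSubgroup.coe_zero, smul_smul]
    rw [show 2 * (w * c) = c * Nat.card K by rw [hcard]; ring, ← smul_smul,
      card_nsmul_eq_zero', nsmul_zero]
  have hcop : Nat.Coprime (Nat.card R) w := by
    refine Nat.coprime_of_dvd fun p hp hpR hpw => ?_
    have := Fact.mk hp
    obtain ⟨y, hy⟩ := exists_prime_addOrderOf_dvd_card' p hpR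
    have hp2 : p ∣ 2 := hy ▸ addOrderOf_dvd_of_nsmul_eq_zero (hR_two y)
    rw [(Nat.prime_dvd_prime_iff_eq hp Nat.prime_two).1 hp2] at hpw
    exact (Nat.not_even_iff_odd.2 hw) (even_iff_two_dvd.2 hpw)
  have hR1 : Nat.card R ≠ 1 := by
    have := Fact.mk Nat.prime_two
    obtain ⟨x, hx⟩ := exists_prime_addOrderOf_dvd_card' (G := K) 2 (hcard ▸ dvd_mul_right 2 w)
    have hvx : v • x = x := by
      obtain ⟨k, rfl⟩ := hv
      rw [add_nsmul, mul_comm, ← smul_smul, ← hx, addOrderOf_nsmul_eq_zero, nsmul_zero, zero_add,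
        one_nsmul]
    rw [Ne, AddSubgroup.card_eq_one, AddSubgroup.eq_bot_iff_forall]
    intro h
    have hx0 : x = 0 := hvx ▸ h _ ⟨x, rfl⟩
    simp [hx0] at hx
  have hR2 : Nat.card R ∣ 2 :=
    hcop.dvd_of_dvd_mul_right (hcard ▸ AddSubgroup.card_addSubgroup_dvd_card R)
  exact ((Nat.dvd_prime Nat.prime_two).1 hR2).resolve_left hR1

lemma two_mul_card_filter_not_mem [Fintype K] {A : AddSubgroup K} (hA : A.index = 2) :
    2 * #{z | z ∉ A} = Nat.card K := by
  have hsplit := card_filter_add_card_filter_not (s := univ) (· ∈ A)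
  rw [card_univ, ← Nat.card_eq_fintype_card, ← A.card_mul_index, hA] at hsplit
  have hmem : #{z | z ∈ A} = Nat.card A := by
    rw [Nat.card_eq_fintype_card, Fintype.card_subtype]
  rw [← A.card_mul_index, hA]
  omega

end IndexTwo

lemma card_filter_addSubgroup [Fintype G] (H : AddSubgroup G) (p : G → Prop) [DecidablePred p] :
    #{z : H | p z} = #{z : G | z ∈ H ∧ p z} := by
  rw [← card_map (Function.Embedding.subtype _)]
  congr 1
  ext z
  simp [and_comm]

lemma two_mul_card_filter_not_mem_and_not_mem [Fintype G] {H A : AddSubgroup G}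
    (hA : A.index = 2) (hAH : A.relIndex H = 2) :
    2 * #{z | z ∉ H ∧ z ∉ A} + Nat.card H = Nat.card G := by
  have hGA := two_mul_card_filter_not_mem hA
  have hHA : 2 * #{z | z ∈ H ∧ z ∉ A} = Nat.card H := by
    rw [← card_filter_addSubgroup H (· ∉ A), ← two_mul_card_filter_not_mem hAH]
    simp only [AddSubgroup.mem_addSubgroupOf]
  have hsplit : #{z | z ∈ H ∧ z ∉ A} + #{z | z ∉ H ∧ z ∉ A} = #{z | z ∉ A} := by
    rw [← card_filter_add_card_filter_not (s := {z | z ∉ A}) (· ∈ H), filter_filter, filter_filter]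
    simp only [and_comm]
  omega

lemma addSubgroupOf_ker_nsmul (H : AddSubgroup G) (n : ℕ) :
    (nsmulAddMonoidHom n : G →+ G).ker.addSubgroupOf H = (nsmulAddMonoidHom n : H →+ H).ker := by
  ext z
  simp only [AddSubgroup.mem_addSubgroupOf, AddMonoidHom.mem_ker, nsmulAddMonoidHom_apply]
  norm_cast

lemma Multiset.countP_bind {α β : Type*} (s : Multiset α) (f : α → Multiset β) (p : β → Prop)
    [DecidablePred p] : (s.bind f).countP p = (s.map fun a => (f a).countP p).sum := by
  simp [Multiset.countP_eq_card_filter, Multiset.filter_bind, Multiset.card_bind]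

section FrameStarter

variable {H A : AddSubgroup G} {S : Finset (G × G)}

lemma countP_eq_card_filter_of_count [Fintype G] {m : Multiset G}
    (hm : ∀ z, m.count z = if z ∈ H then 0 else 1) (p : G → Prop) [DecidablePred p] :
    m.countP p = #{z | z ∉ H ∧ p z} := by
  have hm' : m = ({z | z ∉ H} : Finset G).val := by
    ext z
    rw [hm z, filter_val, Multiset.count_filter]
    by_cases hz : z ∈ H <;> simp [hz]
  rw [hm', Multiset.countP_eq_card_filter, ← filter_val, filter_filter]
  rfl

lemma two_mul_countP_pair_not_mem (hA : A.index = 2) (x y : G) :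
    2 * ({x, y} : Multiset G).countP (· ∉ A) =
      ({x - y, y - x} : Multiset G).countP (· ∉ A) + 4 * if x ∉ A ∧ y ∉ A then 1 else 0 := by
  have hxy : x - y ∈ A ↔ (x ∈ A ↔ y ∈ A) := by
    rw [sub_eq_add_neg, AddSubgroup.add_mem_iff_of_index_two hA, neg_mem_iff]
  have hyx : y - x ∈ A ↔ (x ∈ A ↔ y ∈ A) := by
    rw [← neg_mem_iff, neg_sub, hxy]
  by_cases hx : x ∈ A <;> by_cases hy : y ∈ A <;>
    simp [hx, hy, hxy, hyx, Multiset.countP_eq_card_filter, Multiset.filter_singleton]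

theorem IsFrameStarter.four_dvd_card_filter [Fintype G] (hS : IsFrameStarter H S)
    (hA : A.index = 2) : 4 ∣ #{z | z ∉ H ∧ z ∉ A} := by
  have hE := countP_eq_card_filter_of_count hS.1 (· ∉ A)
  have hD := countP_eq_card_filter_of_count hS.2 (· ∉ A)
  set B := ∑ q ∈ S, if q.1 ∉ A ∧ q.2 ∉ A then 1 else 0
  have hsum : 2 * (starterElems S).countP (· ∉ A) = (starterDiffs S).countP (· ∉ A) + 4 * B := by
    rw [starterElems, starterDiffs, Multiset.countP_bind, Multiset.countP_bind,
      ← sum_eq_multiset_sum, ← sum_eq_multiset_sum, mul_sum, mul_sum,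
      ← sum_add_distrib]
    exact sum_congr rfl fun q _ => two_mul_countP_pair_not_mem hA q.1 q.2
  exact ⟨B, by omega⟩

end FrameStarter

theorem stmt_7 [Fintype G] (H : AddSubgroup G) (u t : ℕ)
    (hG : Nat.card G = 2 * u) (hH : Nat.card H = 2 * t)
    (ht : Odd t) (hdvd : t ∣ u) (hmod : u / t % 4 = 3) :
    ¬ ∃ S : Finset (G × G), IsFrameStarter H S := by
  rintro ⟨S, hS⟩
  obtain ⟨m, rfl⟩ := hdvd
  rw [Nat.mul_div_cancel_left m ht.pos] at hmod
  have hu : Odd (t * m) := ht.mul (Nat.odd_iff.2 (by omega))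
  set A := (nsmulAddMonoidHom (t * m) : G →+ G).ker
  have hA : A.index = 2 := index_ker_nsmul_eq_two hG hu hu dvd_rfl
  have hAH : A.relIndex H = 2 := by
    rw [AddSubgroup.relIndex, addSubgroupOf_ker_nsmul]
    exact index_ker_nsmul_eq_two hH ht hu (dvd_mul_right t m)
  have hcard := two_mul_card_filter_not_mem_and_not_mem hA hAH
  obtain ⟨k, hk⟩ := hS.four_dvd_card_filter hA
  obtain ⟨a, rfl⟩ := ht
  obtain ⟨c, rfl⟩ : ∃ c, m = 4 * c + 3 := ⟨m / 4, by omega⟩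
  rw [hk, hG, hH] at hcard
  ring_nf at hcard
  omega
end

section
/- Suppose G is an abelian group of order 2u with a subgroup H of order 2t, where t is odd and u/t ≡ 2 (mod 4). Then there is no frame starter in G \ H. -/
open scoped Classical

variable {G : Type*} [AddCommGroup G]

lemma two_elt_aux {Q : Type*} [Fintype Q] (h : Fintype.card Q = 2) {a b c : Q}
    (hab : a ≠ b) (hac : a ≠ c) : b = c := by
  by_contra hbc
  have h3 : ({a, b, c} : Finset Q).card = 3 := by
    rw [Finset.card_insert_of_notMem (by simp [hab, hac]),
      Finset.card_insert_of_notMem (by simp [hbc]), Finset.card_singleton]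
  have := Finset.card_le_univ ({a, b, c} : Finset Q)
  rw [h3, h] at this
  omega

lemma exists_index_two {A : Type*} [AddCommGroup A] [Fintype A]
    (h : Nat.card A % 4 = 2) : ∃ K : AddSubgroup A, K.index = 2 := by
  set D : A →+ A := AddMonoidHom.id A + AddMonoidHom.id A with hD
  refine ⟨D.range, ?_⟩
  set K := D.range with hK
  set c := K.index with hc
  have htor : ∀ q : A ⧸ K, q + q = 0 := by
    intro q
    induction q using QuotientAddGroup.induction_on with
    | H a =>
      rw [← QuotientAddGroup.mk_add, QuotientAddGroup.eq_zero_iff]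
      exact ⟨a, rfl⟩
  have hcdvd : c ∣ Nat.card A := AddSubgroup.index_dvd_card K
  have hc0 : c ≠ 0 := AddSubgroup.index_ne_zero_of_finite
  have hc1 : c ≠ 1 := by
    intro h1
    have hKtop : K = ⊤ := AddSubgroup.index_eq_one.mp h1
    have hsurj : Function.Surjective D := by
      intro a
      have : a ∈ K := hKtop ▸ AddSubgroup.mem_top a
      exact this
    have hinj : Function.Injective D := (Finite.injective_iff_surjective).mpr hsurj
    have h2 : (2 : ℕ) ∣ Fintype.card A := by
      rw [← Nat.card_eq_fintype_card]; omega
    obtain ⟨x, hx⟩ := exists_prime_addOrderOf_dvd_card 2 h2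
    have hx0 : D x = D 0 := by
      have := addOrderOf_nsmul_eq_zero x
      rw [hx, two_nsmul] at this
      simp [hD, this]
    have := hinj hx0
    rw [this, addOrderOf_zero] at hx
    omega
  have hprime : ∀ p, p.Prime → p ∣ c → p = 2 := by
    intro p hp hpc
    have : Fact p.Prime := ⟨hp⟩
    have : Fintype (A ⧸ K) := Fintype.ofFinite _
    have hpc' : p ∣ Fintype.card (A ⧸ K) := by
      rwa [← Nat.card_eq_fintype_card]
    obtain ⟨x, hx⟩ := exists_prime_addOrderOf_dvd_card p hpc'
    have hdvd2 : p ∣ 2 := by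
      rw [← hx]
      exact addOrderOf_dvd_of_nsmul_eq_zero (by rw [two_nsmul]; exact htor x)
    have := hp.two_le
    have := Nat.le_of_dvd (by norm_num) hdvd2
    omega
  have h2c : 2 ∣ c := by
    have h1 := Nat.minFac_dvd c
    rwa [hprime c.minFac (Nat.minFac_prime hc1) h1] at h1
  obtain ⟨d, hd⟩ := h2c
  rcases eq_or_ne d 1 with h1 | h1
  · omega
  · exfalso
    have hd0 : d ≠ 0 := by rintro rfl; omega
    have h2d : 2 ∣ d := by
      have h1' := Nat.minFac_dvd d
      rwa [hprime d.minFac (Nat.minFac_prime h1) (h1'.trans ⟨2, by omega⟩)] at h1'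
    obtain ⟨e, he⟩ := h2d
    obtain ⟨k, hk⟩ := hcdvd
    have h4 : Nat.card A = 4 * (e * k) := by rw [hk, hd, he]; ring
    omega

theorem stmt_8 [Fintype G] (H : AddSubgroup G) (u t : ℕ)
    (hG : Nat.card G = 2 * u) (hH : Nat.card H = 2 * t)
    (ht : Odd t) (hdvd : t ∣ u) (hmod : u / t % 4 = 2) :
    ¬ ∃ S : Finset (G × G), IsFrameStarter H S := by
  rintro ⟨S, h1, h2⟩
  obtain ⟨j, htj⟩ := ht
  have ht0 : 0 < t := by omega
  obtain ⟨k, hk⟩ := hdvd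
  -- u % 4 = 2
  have hut : u / t = k := by rw [hk, Nat.mul_div_cancel_left _ ht0]
  have hu4 : u % 4 = 2 := by
    have hm : k = 4 * (k / 4) + 2 := by omega
    have hcalc : u = 4 * (2 * j * (k / 4) + j + (k / 4)) + 2 := by
      calc u = (2 * j + 1) * (4 * (k / 4) + 2) := by rw [hk, htj, ← hm]
        _ = 4 * (2 * j * (k / 4) + j + (k / 4)) + 2 := by ring
    omega
  -- card of quotient
  have : Fintype (G ⧸ H) := Fintype.ofFinite _
  have hA : Nat.card (G ⧸ H) % 4 = 2 := by
    have hcard := AddSubgroup.card_eq_card_quotient_mul_card_addSubgroup H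
    rw [hG, hH] at hcard
    set q := Nat.card (G ⧸ H) with hq
    have e1 : (2 * t) * k = 2 * u := by rw [hk]; ring
    have e2 : (2 * t) * q = 2 * u := by rw [hcard]; ring
    have : k = q := Nat.eq_of_mul_eq_mul_left (by omega) (e1.trans e2.symm)
    omega
  obtain ⟨K₀, hK₀⟩ := exists_index_two hA
  set K : AddSubgroup G := K₀.comap (QuotientAddGroup.mk' H) with hKdef
  have hKi : K.index = 2 := by
    rw [hKdef, AddSubgroup.index_comap_of_surjective _ (QuotientAddGroup.mk'_surjective H)]
    exact hK₀
  have hHK : H ≤ K := by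
    intro h hh
    show (QuotientAddGroup.mk' H) h ∈ K₀
    rw [QuotientAddGroup.mk'_apply, (QuotientAddGroup.eq_zero_iff h).mpr hh]
    exact zero_mem _
  -- the order-2 quotient
  set ψ : G →+ G ⧸ K := QuotientAddGroup.mk' K with hψdef
  have hQ2 : Nat.card (G ⧸ K) = 2 := hKi
  have : Fintype (G ⧸ K) := Fintype.ofFinite _
  have hQ2' : Fintype.card (G ⧸ K) = 2 := by rw [← Nat.card_eq_fintype_card]; exact hQ2
  have htor : ∀ q : G ⧸ K, q + q = 0 := by
    intro q
    have h1 : addOrderOf q ∣ 2 := hQ2 ▸ addOrderOf_dvd_natCard q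
    have := addOrderOf_dvd_iff_nsmul_eq_zero.mp h1
    rwa [two_nsmul] at this
  have hnt : Nontrivial (G ⧸ K) := by
    rw [← Fintype.one_lt_card_iff_nontrivial]; omega
  obtain ⟨e, he⟩ := exists_ne (0 : G ⧸ K)
  have uniq : ∀ q : G ⧸ K, q ≠ 0 → q = e := by
    intro q hq
    exact two_elt_aux hQ2' (Ne.symm hq) (Ne.symm he)
  have hψH : ∀ z ∈ H, ψ z = 0 := by
    intro z hz
    rw [hψdef, QuotientAddGroup.mk'_apply, QuotientAddGroup.eq_zero_iff]
    exact hHK hz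
  -- fiber cardinality
  have hKcard : Nat.card K = u := by
    have := AddSubgroup.card_mul_index K
    rw [hKi, hG] at this
    omega
  have hfiber : (Finset.univ.filter (fun z : G => ψ z = e)).card = u := by
    have hsplit := Finset.card_filter_add_card_filter_not
      (s := (Finset.univ : Finset G)) (p := fun z : G => ψ z = 0)
    have hker : (Finset.univ.filter (fun z : G => ψ z = 0)).card = u := by
      have : (Finset.univ.filter (fun z : G => ψ z = 0)) =
          (Finset.univ.filter (fun z : G => z ∈ K)) := by
        apply Finset.filter_congr
        intro z _
        rw [hψdef, QuotientAddGroup.mk'_apply]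
        simp [QuotientAddGroup.eq_zero_iff]
      rw [this]
      have : Fintype.card K = (Finset.univ.filter (fun z : G => z ∈ K)).card :=
        Fintype.card_subtype _
      rw [← this, ← Nat.card_eq_fintype_card, hKcard]
    have hcG : (Finset.univ : Finset G).card = 2 * u := by
      rw [Finset.card_univ, ← Nat.card_eq_fintype_card, hG]
    have heq : (Finset.univ.filter (fun z : G => ψ z = e)) =
        (Finset.univ.filter (fun z : G => ¬ ψ z = 0)) := by
      ext z
      simp only [Finset.mem_filter, Finset.mem_univ, true_and]
      constructor
      · intro h; rw [h]; exact he
      · intro h; exact uniq _ h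
    rw [heq]
    omega
  -- elems and diffs as the complement of H
  have hElems : starterElems S = (Finset.univ.filter (fun z : G => z ∉ H)).val := by
    refine Multiset.ext.mpr (fun z => ?_)
    rw [h1 z]
    by_cases hz : z ∈ H
    · rw [if_pos hz, eq_comm, Multiset.count_eq_zero]
      simp [hz]
    · rw [if_neg hz, eq_comm]
      apply Multiset.count_eq_one_of_mem (Finset.nodup _)
      simp [hz]
  have hDiffs : starterDiffs S = (Finset.univ.filter (fun z : G => z ∉ H)).val := by
    refine Multiset.ext.mpr (fun z => ?_)
    rw [h2 z]
    by_cases hz : z ∈ H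
    · rw [if_pos hz, eq_comm, Multiset.count_eq_zero]
      simp [hz]
    · rw [if_neg hz, eq_comm]
      apply Multiset.count_eq_one_of_mem (Finset.nodup _)
      simp [hz]
  -- the master count: u copies of e in the image of the complement
  have hmaster : Multiset.count e
      (((Finset.univ.filter (fun z : G => z ∉ H)).val).map ψ) = u := by
    rw [Multiset.count_map]
    have : Multiset.filter (fun a => e = ψ a) (Finset.univ.filter (fun z : G => z ∉ H)).val
        = ((Finset.univ.filter (fun z : G => z ∉ H)).filter (fun a => e = ψ a)).val := by
      exact (Finset.filter_val _ _).symm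
    rw [this]
    have : ((Finset.univ.filter (fun z : G => z ∉ H)).filter (fun a => e = ψ a))
        = Finset.univ.filter (fun z : G => ψ z = e) := by
      rw [Finset.filter_filter]
      ext z
      simp only [Finset.mem_filter, Finset.mem_univ, true_and]
      constructor
      · rintro ⟨_, hze⟩; exact hze.symm
      · intro hze
        refine ⟨fun hzH => ?_, hze.symm⟩
        rw [hψH z hzH] at hze
        exact he hze.symm
    rw [this]
    exact hfiber
  -- counting over pairs
  have hcount_pair : ∀ q1 q2 : G ⧸ K, Multiset.count e ({q1, q2} : Multiset (G ⧸ K))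
      = (if q1 = e then 1 else 0) + (if q2 = e then 1 else 0) := by
    intro q1 q2
    show Multiset.count e (q1 ::ₘ {q2}) = _
    rw [Multiset.count_cons, Multiset.count_singleton]
    have e1 : (if e = q1 then 1 else 0) = (if q1 = e then 1 else 0) := by
      by_cases h : q1 = e
      · rw [if_pos h, if_pos h.symm]
      · rw [if_neg h, if_neg (fun hh => h hh.symm)]
    have e2 : (if e = q2 then 1 else 0) = (if q2 = e then 1 else 0) := by
      by_cases h : q2 = e
      · rw [if_pos h, if_pos h.symm]
      · rw [if_neg h, if_neg (fun hh => h hh.symm)]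
    rw [e1, e2]
    exact Nat.add_comm _ _
  have hsum_elems : u = ∑ p ∈ S,
      ((if ψ p.1 = e then 1 else 0) + (if ψ p.2 = e then 1 else 0)) := by
    have hmap : (starterElems S).map ψ
        = S.val.bind (fun p => ({ψ p.1, ψ p.2} : Multiset (G ⧸ K))) := by
      rw [starterElems, Multiset.map_bind]
      simp
    rw [← hmaster, ← hElems, hmap, Multiset.count_bind]
    exact (congrArg Multiset.sum
      (Multiset.map_congr rfl (fun p _ => hcount_pair _ _))).symm ▸ rfl
  have hsum_diffs : u = ∑ p ∈ S, 2 * (if ψ p.1 - ψ p.2 = e then 1 else 0) := by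
    have hmap : (starterDiffs S).map ψ
        = S.val.bind (fun p => ({ψ (p.1 - p.2), ψ (p.2 - p.1)} : Multiset (G ⧸ K))) := by
      rw [starterDiffs, Multiset.map_bind]
      simp
    rw [← hmaster, ← hDiffs, hmap, Multiset.count_bind]
    have hpt : ∀ p : G × G, Multiset.count e ({ψ (p.1 - p.2), ψ (p.2 - p.1)} : Multiset (G ⧸ K))
        = 2 * (if ψ p.1 - ψ p.2 = e then 1 else 0) := by
      intro p
      rw [hcount_pair]
      have hneg : ψ (p.2 - p.1) = ψ (p.1 - p.2) := by
        rw [map_sub, map_sub, ← neg_sub (ψ p.1) (ψ p.2)]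
        exact neg_eq_iff_add_eq_zero.mpr (htor _)
      rw [hneg, map_sub]
      by_cases hc : ψ p.1 - ψ p.2 = e <;> simp [hc]
    exact (congrArg Multiset.sum
      (Multiset.map_congr rfl (fun p _ => hpt p))).symm ▸ rfl
  -- parity
  have hparity : ∀ p ∈ S,
      ((if ψ p.1 = e then 1 else 0) + (if ψ p.2 = e then 1 else 0)) % 2
      = (if ψ p.1 - ψ p.2 = e then 1 else 0) % 2 := by
    intro p _
    by_cases h1 : ψ p.1 = e <;> by_cases h2 : ψ p.2 = e
    · rw [if_pos h1, if_pos h2,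
        if_neg (show ψ p.1 - ψ p.2 ≠ e by rw [h1, h2, sub_self]; exact Ne.symm he)]
    · have hz2 : ψ p.2 = 0 := by by_contra hz; exact h2 (uniq _ hz)
      rw [if_pos h1, if_neg h2,
        if_pos (show ψ p.1 - ψ p.2 = e by rw [h1, hz2, sub_zero])]
    · have hz1 : ψ p.1 = 0 := by by_contra hz; exact h1 (uniq _ hz)
      rw [if_neg h1, if_pos h2,
        if_pos (show ψ p.1 - ψ p.2 = e by
          rw [hz1, h2, zero_sub]; exact neg_eq_iff_add_eq_zero.mpr (htor e))]
    · have hz1 : ψ p.1 = 0 := by by_contra hz; exact h1 (uniq _ hz)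
      have hz2 : ψ p.2 = 0 := by by_contra hz; exact h2 (uniq _ hz)
      rw [if_neg h1, if_neg h2,
        if_neg (show ψ p.1 - ψ p.2 ≠ e by rw [hz1, hz2, sub_self]; exact Ne.symm he)]
  set a := ∑ p ∈ S, (if ψ p.1 - ψ p.2 = e then 1 else 0) with ha
  have hu2a : u = 2 * a := by rw [hsum_diffs, ha, Finset.mul_sum]
  have humod : u % 2 = a % 2 := by
    rw [hsum_elems, ha, Finset.sum_nat_mod, Finset.sum_congr rfl hparity,
      ← Finset.sum_nat_mod]
  omega
end

section
/- Suppose G₁, G₂ are finite abelian groups, H is a subgroup of G₁, there is a strong frame starter in G₁ \ H, and there is a strong complete mapping of G₂. Then there is a strong frame starter in (G₁ × G₂) \ (H × G₂). -/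
open scoped Classical

variable {G : Type*} [AddCommGroup G]

/-- A strong complete mapping of an abelian group. -/
def IsStrongCompleteMapping {A : Type*} [AddCommGroup A] (φ : A → A) : Prop :=
  Function.Bijective φ ∧ Function.Bijective (fun x => φ x - x) ∧
    Function.Bijective (fun x => φ x + x)

lemma sum_indicator_bij {A B : Type*} [Fintype A] [DecidableEq B]
    {ψ : A → B} (hψ : Function.Bijective ψ) (h : B) :
    (∑ g : A, if h = ψ g then (1 : ℕ) else 0) = 1 := by
  obtain ⟨g₀, hg₀⟩ := hψ.surjective h
  rw [Finset.sum_eq_single g₀]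
  · simp [hg₀]
  · intro b _ hb
    simp only [ite_eq_right_iff]
    intro hb'
    exact absurd (hψ.injective (hg₀.trans hb')).symm hb
  · simp

lemma inner_count {G₁ G₂ : Type*} [Fintype G₂] [DecidableEq G₁] [DecidableEq G₂]
    (u v z : G₁) (ψ₁ ψ₂ : G₂ → G₂) (hψ₁ : Function.Bijective ψ₁)
    (hψ₂ : Function.Bijective ψ₂) (h : G₂) :
    (∑ g : G₂, Multiset.count ((z, h) : G₁ × G₂) {(u, ψ₁ g), (v, ψ₂ g)})
      = Multiset.count z ({u, v} : Multiset G₁) := by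
  have : ∀ g : G₂, Multiset.count ((z, h) : G₁ × G₂) {(u, ψ₁ g), (v, ψ₂ g)}
      = (if z = u ∧ h = ψ₁ g then 1 else 0) + (if z = v ∧ h = ψ₂ g then 1 else 0) := by
    intro g
    simp [Multiset.insert_eq_cons, Multiset.count_cons, Multiset.count_singleton,
      Prod.ext_iff, add_comm]
  simp only [this, Finset.sum_add_distrib]
  have e1 : (∑ g : G₂, if z = u ∧ h = ψ₁ g then (1:ℕ) else 0) = if z = u then 1 else 0 := by
    by_cases hz : z = u
    · simp only [hz, true_and, if_true]
      exact sum_indicator_bij hψ₁ h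
    · simp [hz]
  have e2 : (∑ g : G₂, if z = v ∧ h = ψ₂ g then (1:ℕ) else 0) = if z = v then 1 else 0 := by
    by_cases hz : z = v
    · simp only [hz, true_and, if_true]
      exact sum_indicator_bij hψ₂ h
    · simp [hz]
  rw [e1, e2]
  simp [Multiset.insert_eq_cons, Multiset.count_cons, Multiset.count_singleton, add_comm]

theorem stmt_11 {G₁ G₂ : Type*} [AddCommGroup G₁] [AddCommGroup G₂]
    [Fintype G₁] [Fintype G₂] (H : AddSubgroup G₁)
    (hS : ∃ S : Finset (G₁ × G₁), IsStrongFrameStarter H S)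
    (hφ : ∃ φ : G₂ → G₂, IsStrongCompleteMapping φ) :
    ∃ S' : Finset ((G₁ × G₂) × (G₁ × G₂)),
      IsStrongFrameStarter (H.prod (⊤ : AddSubgroup G₂)) S' := by

  obtain ⟨S, ⟨hE, hD⟩, hSum, hInj⟩ := hS
  obtain ⟨φ, hφb, hφd, hφs⟩ := hφ
  have hembinj : Function.Injective
      (fun q : (G₁ × G₁) × G₂ => (((q.1.1, φ q.2), (q.1.2, q.2)) : (G₁ × G₂) × (G₁ × G₂))) := by
    rintro ⟨⟨x, y⟩, g⟩ ⟨⟨x', y'⟩, g'⟩ hq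
    simp only [Prod.mk.injEq] at hq
    obtain ⟨⟨h1, -⟩, h3, h4⟩ := hq
    simp [h1, h3, h4]
  set emb : (G₁ × G₁) × G₂ ↪ (G₁ × G₂) × (G₁ × G₂) :=
    ⟨fun q => ((q.1.1, φ q.2), (q.1.2, q.2)), hembinj⟩ with hemb
  set S' : Finset ((G₁ × G₂) × (G₁ × G₂)) := (S ×ˢ Finset.univ).map emb with hS'
  have count_general : ∀ (F : (G₁ × G₂) × (G₁ × G₂) → Multiset (G₁ × G₂)) (z' : G₁ × G₂),
      Multiset.count z' (S'.val.bind F)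
        = ∑ p ∈ S, ∑ g : G₂, Multiset.count z' (F ((p.1, φ g), (p.2, g))) := by
    intro F z'
    rw [hS', Finset.map_val, Multiset.bind_map, Multiset.count_bind,
      ← Finset.sum_eq_multiset_sum, Finset.sum_product]
    rfl
  have count_S : ∀ (F : G₁ × G₁ → Multiset G₁) (z : G₁),
      Multiset.count z (S.val.bind F) = ∑ p ∈ S, Multiset.count z (F p) := by
    intro F z
    rw [Multiset.count_bind, ← Finset.sum_eq_multiset_sum]
  have hmem : ∀ z : G₁, ∀ h : G₂, ((z, h) ∈ H.prod (⊤ : AddSubgroup G₂)) ↔ z ∈ H := by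
    intro z h
    simp [AddSubgroup.mem_prod]
  have hψ₂ : Function.Bijective (fun g : G₂ => g - φ g) := by
    have : (fun g : G₂ => g - φ g) = (fun x => -x) ∘ (fun g => φ g - g) := by
      funext g; simp
    rw [this]
    exact (neg_involutive.bijective).comp hφd
  refine ⟨S', ⟨?_, ?_⟩, ?_, ?_⟩
  · rintro ⟨z, h⟩
    rw [hmem z h] at *
    have key : ∀ p ∈ S, (∑ g : G₂,
        Multiset.count ((z, h) : G₁ × G₂) {(p.1, φ g), (p.2, g)})
          = Multiset.count z ({p.1, p.2} : Multiset G₁) := by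
      intro p _
      exact inner_count p.1 p.2 z φ id hφb Function.bijective_id h
    have final : Multiset.count ((z, h) : G₁ × G₂) (starterElems S')
        = if z ∈ H then 0 else 1 :=
      calc Multiset.count ((z, h) : G₁ × G₂) (starterElems S')
        = ∑ p ∈ S, ∑ g : G₂,
            Multiset.count ((z, h) : G₁ × G₂) {(p.1, φ g), (p.2, g)} :=
          count_general _ _
      _ = ∑ p ∈ S, Multiset.count z ({p.1, p.2} : Multiset G₁) :=
          Finset.sum_congr rfl key
      _ = Multiset.count z (starterElems S) := (count_S _ z).symm
      _ = if z ∈ H then 0 else 1 := hE z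
    convert final using 2
  · rintro ⟨z, h⟩
    rw [hmem z h] at *
    have key : ∀ p ∈ S, (∑ g : G₂,
        Multiset.count ((z, h) : G₁ × G₂)
          {((p.1, φ g) : G₁ × G₂) - (p.2, g), ((p.2, g) : G₁ × G₂) - (p.1, φ g)})
          = Multiset.count z ({p.1 - p.2, p.2 - p.1} : Multiset G₁) := by
      intro p _
      have he : ∀ g : G₂, ((((p.1, φ g) : G₁ × G₂) - (p.2, g) : G₁ × G₂),
          (((p.2, g) : G₁ × G₂) - (p.1, φ g) : G₁ × G₂))
          = (((p.1 - p.2, φ g - g) : G₁ × G₂), ((p.2 - p.1, g - φ g) : G₁ × G₂)) := by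
        intro g; rfl
      have : ∀ g : G₂,
          Multiset.count ((z, h) : G₁ × G₂)
            {((p.1, φ g) : G₁ × G₂) - (p.2, g), ((p.2, g) : G₁ × G₂) - (p.1, φ g)}
          = Multiset.count ((z, h) : G₁ × G₂)
            {((p.1 - p.2, φ g - g) : G₁ × G₂), ((p.2 - p.1, g - φ g) : G₁ × G₂)} := by
        intro g
        rw [show (((p.1, φ g) : G₁ × G₂) - (p.2, g) : G₁ × G₂)
            = ((p.1 - p.2, φ g - g) : G₁ × G₂) from rfl,
          show (((p.2, g) : G₁ × G₂) - (p.1, φ g) : G₁ × G₂)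
            = ((p.2 - p.1, g - φ g) : G₁ × G₂) from rfl]
      rw [Finset.sum_congr rfl (fun g _ => this g)]
      exact inner_count (p.1 - p.2) (p.2 - p.1) z (fun g => φ g - g) (fun g => g - φ g)
        hφd hψ₂ h
    have final : Multiset.count ((z, h) : G₁ × G₂) (starterDiffs S')
        = if z ∈ H then 0 else 1 :=
      calc Multiset.count ((z, h) : G₁ × G₂) (starterDiffs S')
        = ∑ p ∈ S, ∑ g : G₂,
            Multiset.count ((z, h) : G₁ × G₂)
              {((p.1, φ g) : G₁ × G₂) - (p.2, g), ((p.2, g) : G₁ × G₂) - (p.1, φ g)} :=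
          count_general _ _
      _ = ∑ p ∈ S, Multiset.count z ({p.1 - p.2, p.2 - p.1} : Multiset G₁) :=
          Finset.sum_congr rfl key
      _ = Multiset.count z (starterDiffs S) := (count_S _ z).symm
      _ = if z ∈ H then 0 else 1 := hD z
    convert final using 2
  · rintro ⟨a, b⟩ hab
    rw [hS', Finset.mem_map] at hab
    obtain ⟨⟨p, g⟩, hpg, hq⟩ := hab
    rw [Finset.mem_product] at hpg
    have := hSum p hpg.1
    cases hq
    rw [hmem]
    exact this
  · rintro ⟨a, b⟩ hab ⟨c, d⟩ hcd hsum
    rw [hS', Finset.mem_map] at hab hcd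
    obtain ⟨⟨p, g⟩, hpg, hq⟩ := hab
    obtain ⟨⟨p', g'⟩, hpg', hq'⟩ := hcd
    rw [Finset.mem_product] at hpg hpg'
    cases hq; cases hq'
    simp only [hemb, Function.Embedding.coeFn_mk, Prod.mk.injEq, Prod.ext_iff] at hsum ⊢
    obtain ⟨hs1, hs2⟩ := hsum
    have hpp : p = p' := hInj p hpg.1 p' hpg'.1 hs1
    have hgg : g = g' := hφs.injective (by simpa using hs2)
    subst hpp; subst hgg
    simp
end

section
/- Suppose G₁, G₂ are finite abelian groups, H is a subgroup of G₁, there is a strong frame starter in G₁ \ H, a strong frame starter in (H × G₂) \ (H × {0}), and a strong complete mapping of G₂. Then there is a strong frame starter in (G₁ × G₂) \ (H × {0}). -/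
open scoped Classical

variable {G : Type*} [AddCommGroup G]

/-!
Each pair `{x, y}` of the starter in `G₁ \ H` is lifted to the pairs `{(x, φ a), (y, a)}`,
`a ∈ G₂`. Since `φ`, `φ - id` and `φ + id` are bijections, the lifted pairs have as elements and
as differences every element of `(G₁ \ H) × G₂` exactly once, and pairwise distinct sums outside
`H × G₂`. Embedding the starter of `(H × G₂) \ (H × {0})` covers the rest; its sums lie in `H × G₂`,
so the two families cannot collide.
-/

open Function

-- The instance on `α × β` is arbitrary so that the lemma also applies under `Classical`.
theorem Multiset.count_product {α β : Type*} [DecidableEq α] [DecidableEq β]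
    [DecidableEq (α × β)] (s : Multiset α) (t : Multiset β) (p : α × β) :
    (s ×ˢ t).count p = s.count p.1 * t.count p.2 := by
  induction s using Multiset.induction with
  | empty => simp
  | cons a s ih =>
    rw [Multiset.cons_product, Multiset.count_add, ih, Multiset.count_cons]
    obtain ⟨x, y⟩ := p
    by_cases h : x = a
    · subst h
      rw [Multiset.count_map_eq_count' _ _ (Prod.mk_right_injective x)]
      simp [add_mul, add_comm]
    · rw [Multiset.count_eq_zero.mpr (by simp [Ne.symm h])]
      simp [h]

theorem Multiset.product_bind {α β γ : Type*} (s : Multiset α) (t : Multiset β)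
    (f : α × β → Multiset γ) : (s ×ˢ t).bind f = s.bind fun a => t.bind fun b => f (a, b) := by
  simp only [SProd.sprod, Multiset.product, Multiset.bind_assoc, Multiset.bind_map]

theorem Multiset.bind_product {α β γ : Type*} (s : Multiset α) (f : α → Multiset β)
    (t : Multiset γ) : s.bind f ×ˢ t = s.bind fun a => f a ×ˢ t := by
  simp only [SProd.sprod, Multiset.product, Multiset.bind_assoc]

theorem Multiset.bind_univ_val_pair {α β : Type*} [Fintype β] (c₁ c₂ : α) {ψ₁ ψ₂ : β → β}
    (h₁ : ψ₁.Bijective) (h₂ : ψ₂.Bijective) :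
    (Finset.univ.val : Multiset β).bind (fun b => {(c₁, ψ₁ b), (c₂, ψ₂ b)}) =
      {c₁, c₂} ×ˢ Finset.univ.val := by
  have map_univ {ψ : β → β} (hψ : ψ.Bijective) (c : α) :
      (Finset.univ.val : Multiset β).map (fun b => (c, ψ b)) =
        Finset.univ.val.map (Prod.mk c) := by
    conv_rhs => rw [← Multiset.map_univ_val_equiv (Equiv.ofBijective ψ hψ), Multiset.map_map]
    rfl
  calc (Finset.univ.val : Multiset β).bind (fun b => {(c₁, ψ₁ b), (c₂, ψ₂ b)})
      = Finset.univ.val.map (fun b => (c₁, ψ₁ b)) +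
          Finset.univ.val.map (fun b => (c₂, ψ₂ b)) := by
        rw [← Multiset.bind_singleton, ← Multiset.bind_singleton, ← Multiset.bind_add]
        rfl
    _ = {c₁, c₂} ×ˢ Finset.univ.val := by
        rw [map_univ h₁, map_univ h₂, Multiset.insert_eq_cons, ← Multiset.cons_zero,
          Multiset.cons_product, Multiset.cons_product, Multiset.zero_product, add_zero]

-- `IsFrameStarter K S` unfolds to
-- `EnumeratesCompl K (starterElems S) ∧ EnumeratesCompl K (starterDiffs S)`.
def EnumeratesCompl (K : AddSubgroup G) (m : Multiset G) : Prop :=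
  ∀ z, m.count z = if z ∈ K then 0 else 1

theorem starterElems_union {α : Type*} {S T : Finset (α × α)} (h : Disjoint S T) :
    starterElems (S ∪ T) = starterElems S + starterElems T := by
  rw [← Finset.disjUnion_eq_union S T h, starterElems, Finset.disjUnion_val, Multiset.add_bind]
  rfl

theorem starterDiffs_union {S T : Finset (G × G)} (h : Disjoint S T) :
    starterDiffs (S ∪ T) = starterDiffs S + starterDiffs T := by
  rw [← Finset.disjUnion_eq_union S T h, starterDiffs, Finset.disjUnion_val, Multiset.add_bind]
  rfl

section Lift

variable {G₁ G₂ : Type*} [Fintype G₂]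

def liftStarter (S : Finset (G₁ × G₁)) (φ : G₂ → G₂) : Finset ((G₁ × G₂) × (G₁ × G₂)) :=
  (S ×ˢ Finset.univ).map ⟨fun q => ((q.1.1, φ q.2), (q.1.2, q.2)), fun q r h => by
    simp only [Prod.mk.injEq] at h
    exact Prod.ext (Prod.ext h.1.1 h.2.1) h.2.2⟩

theorem liftStarter_val (S : Finset (G₁ × G₁)) (φ : G₂ → G₂) :
    (liftStarter S φ).val =
      (S.val ×ˢ Finset.univ.val).map fun q => ((q.1.1, φ q.2), (q.1.2, q.2)) :=
  rfl

theorem mem_liftStarter {S : Finset (G₁ × G₁)} {φ : G₂ → G₂} {p : (G₁ × G₂) × (G₁ × G₂)} :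
    p ∈ liftStarter S φ ↔ ∃ q ∈ S, ∃ a, ((q.1, φ a), (q.2, a)) = p := by
  rw [← Finset.mem_val, liftStarter_val]
  simp

theorem starterElems_liftStarter (S : Finset (G₁ × G₁)) {φ : G₂ → G₂} (hφ : φ.Bijective) :
    starterElems (liftStarter S φ) = starterElems S ×ˢ Finset.univ.val := by
  simp only [starterElems, liftStarter_val, Multiset.bind_map,
    Multiset.product_bind, Multiset.bind_product]
  exact Multiset.bind_congr fun p _ => Multiset.bind_univ_val_pair p.1 p.2 hφ bijective_id

theorem starterDiffs_liftStarter [AddCommGroup G₁] [AddCommGroup G₂] (S : Finset (G₁ × G₁))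
    {φ : G₂ → G₂} (hφ : (fun a => φ a - a).Bijective) :
    starterDiffs (liftStarter S φ) = starterDiffs S ×ˢ Finset.univ.val := by
  have hneg : (fun a => a - φ a).Bijective := by
    simpa only [Function.comp_def, neg_sub] using neg_involutive.bijective.comp hφ
  simp only [starterDiffs, liftStarter_val, Multiset.bind_map,
    Multiset.product_bind, Multiset.bind_product, Prod.mk_sub_mk]
  exact Multiset.bind_congr fun p _ => Multiset.bind_univ_val_pair _ _ hφ hneg

theorem EnumeratesCompl.product_univ [AddCommGroup G₁] [AddCommGroup G₂] {H : AddSubgroup G₁}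
    {m : Multiset G₁} (h : EnumeratesCompl H m) :
    EnumeratesCompl (H.prod (⊤ : AddSubgroup G₂)) (m ×ˢ Finset.univ.val) := fun z => by
  simp [Multiset.count_product, h z.1, AddSubgroup.mem_prod]

theorem IsStrongFrameStarter.liftStarter [AddCommGroup G₁] [AddCommGroup G₂]
    {H : AddSubgroup G₁} {S : Finset (G₁ × G₁)} {φ : G₂ → G₂}
    (hS : IsStrongFrameStarter H S) (hφ : IsStrongCompleteMapping φ) :
    IsStrongFrameStarter (H.prod ⊤) (liftStarter S φ) := by
  obtain ⟨⟨hElems, hDiffs⟩, hSumNotMem, hSumInj⟩ := hS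
  refine ⟨⟨?_, ?_⟩, ?_, ?_⟩
  · rw [starterElems_liftStarter S hφ.1]
    exact EnumeratesCompl.product_univ hElems
  · rw [starterDiffs_liftStarter S hφ.2.1]
    exact EnumeratesCompl.product_univ hDiffs
  · rintro _ hp
    obtain ⟨q, hq, a, rfl⟩ := mem_liftStarter.mp hp
    simpa [AddSubgroup.mem_prod] using hSumNotMem q hq
  · rintro _ hp _ hp' h
    obtain ⟨q, hq, a, rfl⟩ := mem_liftStarter.mp hp
    obtain ⟨q', hq', a', rfl⟩ := mem_liftStarter.mp hp'
    simp only [Prod.mk_add_mk, Prod.mk.injEq] at h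
    rw [hSumInj q hq q' hq' h.1, hφ.2.2.injective h.2]

end Lift

section Map

variable {G' : Type*} [AddCommGroup G'] (f : G' →+ G)

theorem starterElems_map (hf : Injective f) (S : Finset (G' × G')) :
    starterElems (S.map (.prodMap ⟨f, hf⟩ ⟨f, hf⟩)) = (starterElems S).map f := by
  simp [starterElems]

theorem starterDiffs_map (hf : Injective f) (S : Finset (G' × G')) :
    starterDiffs (S.map (.prodMap ⟨f, hf⟩ ⟨f, hf⟩)) = (starterDiffs S).map f := by
  simp [starterDiffs]

theorem EnumeratesCompl.add_map (hf : Injective f) {K : AddSubgroup G'} {mA : Multiset G}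
    {mB : Multiset G'} (hA : EnumeratesCompl f.range mA) (hB : EnumeratesCompl K mB) :
    EnumeratesCompl (K.map f) (mA + mB.map f) := by
  intro z
  rw [Multiset.count_add, hA]
  by_cases hz : z ∈ f.range
  · obtain ⟨w, rfl⟩ := hz
    rw [if_pos ⟨w, rfl⟩, Multiset.count_map_eq_count' f mB hf, hB,
      AddSubgroup.mem_map_iff_mem hf, zero_add]
  · have hzK : z ∉ K.map f := fun h => hz (AddSubgroup.map_le_range f K h)
    have hzB : z ∉ mB.map f := fun h => by
      obtain ⟨w, -, rfl⟩ := Multiset.mem_map.mp h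
      exact hz ⟨w, rfl⟩
    rw [if_neg hz, if_neg hzK, Multiset.count_eq_zero.mpr hzB]

theorem IsStrongFrameStarter.union_map (hf : Injective f) {K : AddSubgroup G'}
    {A : Finset (G × G)} {B : Finset (G' × G')} (hA : IsStrongFrameStarter f.range A)
    (hB : IsStrongFrameStarter K B) :
    IsStrongFrameStarter (K.map f) (A ∪ B.map (.prodMap ⟨f, hf⟩ ⟨f, hf⟩)) := by
  obtain ⟨⟨hAElems, hADiffs⟩, hASum, hAInj⟩ := hA
  obtain ⟨⟨hBElems, hBDiffs⟩, hBSum, hBInj⟩ := hB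
  have sum_mem_range : ∀ p ∈ B.map (.prodMap ⟨f, hf⟩ ⟨f, hf⟩), p.1 + p.2 ∈ f.range := by
    intro p hp
    obtain ⟨q, -, rfl⟩ := Finset.mem_map.mp hp
    exact ⟨q.1 + q.2, map_add f q.1 q.2⟩
  have hdisj : Disjoint A (B.map (.prodMap ⟨f, hf⟩ ⟨f, hf⟩)) :=
    Finset.disjoint_left.mpr fun p hpA hpB => hASum p hpA (sum_mem_range p hpB)
  refine ⟨⟨?_, ?_⟩, ?_, ?_⟩
  · rw [starterElems_union hdisj, starterElems_map]
    exact EnumeratesCompl.add_map f hf hAElems hBElems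
  · rw [starterDiffs_union hdisj, starterDiffs_map]
    exact EnumeratesCompl.add_map f hf hADiffs hBDiffs
  · intro p hp
    rcases Finset.mem_union.mp hp with hp | hp
    · exact fun h => hASum p hp (AddSubgroup.map_le_range f K h)
    · obtain ⟨q, hq, rfl⟩ := Finset.mem_map.mp hp
      simpa [← map_add, AddSubgroup.mem_map_iff_mem hf] using hBSum q hq
  · intro p hp p' hp' h
    rcases Finset.mem_union.mp hp with hp | hp <;> rcases Finset.mem_union.mp hp' with hp' | hp'
    · exact hAInj p hp p' hp' h
    · exact absurd (h ▸ sum_mem_range p' hp') (hASum p hp)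
    · exact absurd (h ▸ sum_mem_range p hp) (hASum p' hp')
    · obtain ⟨q, hq, rfl⟩ := Finset.mem_map.mp hp
      obtain ⟨q', hq', rfl⟩ := Finset.mem_map.mp hp'
      have hsum : f (q.1 + q.2) = f (q'.1 + q'.2) := by simpa using h
      rw [hBInj q hq q' hq' (hf hsum)]

end Map

theorem stmt_13_general {G₁ G₂ : Type*} [AddCommGroup G₁] [AddCommGroup G₂]
    [Fintype G₂] (H : AddSubgroup G₁)
    (hS₁ : ∃ S : Finset (G₁ × G₁), IsStrongFrameStarter H S)
    (hS₂ : ∃ S : Finset ((H × G₂) × (H × G₂)),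
      IsStrongFrameStarter ((⊤ : AddSubgroup H).prod (⊥ : AddSubgroup G₂)) S)
    (hφ : ∃ φ : G₂ → G₂, IsStrongCompleteMapping φ) :
    ∃ S' : Finset ((G₁ × G₂) × (G₁ × G₂)),
      IsStrongFrameStarter (H.prod (⊥ : AddSubgroup G₂)) S' := by
  obtain ⟨S₁, hS₁⟩ := hS₁
  obtain ⟨S₂, hS₂⟩ := hS₂
  obtain ⟨φ, hφ⟩ := hφ
  let f : H × G₂ →+ G₁ × G₂ := H.subtype.prodMap (AddMonoidHom.id G₂)
  have hf : Injective f := Subtype.val_injective.prodMap injective_id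
  have hrange : f.range = H.prod ⊤ := by
    rw [AddMonoidHom.range_prodMap, AddSubgroup.range_subtype, AddMonoidHom.range_eq_top.mpr]
    exact surjective_id
  have hmap : ((⊤ : AddSubgroup H).prod ⊥).map f = H.prod ⊥ := by
    ext ⟨x, y⟩
    simp [f, AddSubgroup.mem_prod, eq_comm]
  exact ⟨_, hmap ▸ (hrange ▸ hS₁.liftStarter hφ).union_map f hf hS₂⟩

theorem stmt_13 {G₁ G₂ : Type*} [AddCommGroup G₁] [AddCommGroup G₂]
    [Fintype G₁] [Fintype G₂] (H : AddSubgroup G₁)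
    (hS₁ : ∃ S : Finset (G₁ × G₁), IsStrongFrameStarter H S)
    (hS₂ : ∃ S : Finset ((H × G₂) × (H × G₂)),
      IsStrongFrameStarter ((⊤ : AddSubgroup H).prod (⊥ : AddSubgroup G₂)) S)
    (hφ : ∃ φ : G₂ → G₂, IsStrongCompleteMapping φ) :
    ∃ S' : Finset ((G₁ × G₂) × (G₁ × G₂)),
      IsStrongFrameStarter (H.prod (⊥ : AddSubgroup G₂)) S' :=
  stmt_13_general H hS₁ hS₂ hφ
end

section
/- Suppose t is odd, G is an abelian group of order 5t, and H is a subgroup of order t. Then there does not exist a strong frame starter in G \ H. -/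
open scoped Classical

variable {G : Type*} [AddCommGroup G]

section Helpers
variable {Q : Type*} [AddCommGroup Q]

lemma five_smul_zero' (h5 : Nat.card Q = 5) (x : Q) : 5 • x = 0 := by
  have := card_nsmul_eq_zero' (x := x)
  rwa [h5] at this

lemma six_smul (h5 : ∀ x : Q, 5 • x = 0) (x : Q) : (6 : ℕ) • x = x := by
  have : (6 : ℕ) • x = 1 • x + 5 • x := by rw [← add_nsmul]
  simpa [h5 x] using this

lemma two_smul_eq_iff (h5 : ∀ x : Q, 5 • x = 0) (x z : Q) : 2 • x = z ↔ x = 3 • z := by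
  constructor
  · intro h
    have : (3 : ℕ) • (2 • x) = x := by rw [← mul_nsmul]; exact six_smul h5 x
    rw [h] at this
    exact this.symm
  · intro h
    rw [h, ← mul_nsmul]
    exact six_smul h5 z

lemma three_three_smul (h5 : ∀ x : Q, 5 • x = 0) (x : Q) : (3 : ℕ) • (3 : ℕ) • x = -x := by
  rw [← mul_nsmul]
  have h10 : (10 : ℕ) • x = 0 := by
    rw [show (10 : ℕ) = 2 * 5 from rfl, mul_nsmul, h5]
  have : (9 : ℕ) • x + x = 0 := by
    have : (9 : ℕ) • x + 1 • x = (10 : ℕ) • x := by rw [← add_nsmul]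
    simpa [h10] using this
  exact eq_neg_of_add_eq_zero_left this

lemma three_smul_ne (h5 : ∀ x : Q, 5 • x = 0) (x : Q) (hx : x ≠ 0) : (3 : ℕ) • x ≠ 0 := by
  intro h
  apply hx
  have : (2 : ℕ) • (3 : ℕ) • x = x := by rw [← mul_nsmul]; exact six_smul h5 x
  rw [h, smul_zero] at this
  exact this.symm

lemma neg_smul_two (x : Q) : x - 2 • x = -x := by
  rw [two_nsmul]; abel

lemma smul_two_sub (x : Q) : 2 • x - x = x := by
  rw [two_nsmul]; abel

lemma five_cases (h5 : Nat.card Q = 5)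
    {a b : Q} (ha : a ≠ 0) (hb : b ≠ 0) (hab : b ≠ a) (hab' : b ≠ -a) :
    b = 2 • a ∨ a = 2 • b := by
  have hfin : Finite Q := Nat.finite_of_card_ne_zero (by omega)
  have hfive : ∀ x : Q, 5 • x = 0 := five_smul_zero' h5
  have hord : addOrderOf a = 5 := by
    have hdvd : addOrderOf a ∣ 5 := h5 ▸ addOrderOf_dvd_natCard a
    rcases (Nat.prime_five.eq_one_or_self_of_dvd _ hdvd) with h | h
    · exact absurd (AddMonoid.addOrderOf_eq_one_iff.mp h) ha
    · exact h
  have hinj : ∀ i j : ℕ, i < 5 → j < 5 → i • a = j • a → i = j := by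
    intro i j hi hj hij
    by_contra hne
    wlog hlt : i < j generalizing i j
    · exact this j i hj hi hij.symm (Ne.symm hne) (by omega)
    have : (j - i) • a = 0 := by
      rw [sub_nsmul a (le_of_lt hlt), ← hij]; simp
    have hdd := addOrderOf_dvd_of_nsmul_eq_zero this
    rw [hord] at hdd
    have := Nat.le_of_dvd (by omega) hdd
    omega
  have : Fintype Q := Fintype.ofFinite Q
  have hcardQ : Fintype.card Q = 5 := by
    rw [← Nat.card_eq_fintype_card, h5]
  have hmem : b ∈ (Finset.range 5).image (fun i => i • a) := by
    have hcard : ((Finset.range 5).image (fun i => i • a)).card = 5 := by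
      rw [Finset.card_image_of_injOn, Finset.card_range]
      intro i hi j hj hij
      exact hinj i j (Finset.mem_range.mp hi) (Finset.mem_range.mp hj) hij
    have : (Finset.range 5).image (fun i => i • a) = Finset.univ := by
      apply Finset.eq_univ_of_card
      rw [hcard, hcardQ]
    rw [this]; exact Finset.mem_univ b
  simp only [Finset.mem_image, Finset.mem_range] at hmem
  obtain ⟨i, hi, hb'⟩ := hmem
  interval_cases i
  · simp at hb'; exact absurd hb'.symm hb
  · simp at hb'; exact absurd hb'.symm hab
  · left; exact hb'.symm
  · right
    rw [← hb']
    have h6 : (6 : ℕ) • a = a := six_smul hfive a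
    calc a = (6 : ℕ) • a := h6.symm
      _ = 2 • (3 : ℕ) • a := by rw [← mul_nsmul]
  · exfalso; apply hab'
    rw [← hb']
    have : (4 : ℕ) • a + a = 0 := by
      have : (4 : ℕ) • a + 1 • a = (4 + 1) • a := (add_nsmul a 4 1).symm
      simpa [hfive a] using this
    linear_combination (norm := abel) this

end Helpers

lemma fiber_card [Fintype G] (H : AddSubgroup G) (t : ℕ)
    (hH : Nat.card H = t) (z : G ⧸ H) :
    (Finset.univ.filter fun g : G => (g : G ⧸ H) = z).card = t := by
  obtain ⟨g₀, hg₀⟩ := QuotientAddGroup.mk_surjective z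
  have h0 : (Finset.univ.filter fun g : G => (g : G ⧸ H) = z).card
      = (Finset.univ.filter fun g : G => g ∈ H).card := by
    apply Finset.card_bij' (fun g _ => g - g₀) (fun g _ => g + g₀)
    · intro g hg
      simp only [Finset.mem_filter, Finset.mem_univ, true_and] at hg ⊢
      rw [← QuotientAddGroup.eq_zero_iff, QuotientAddGroup.mk_sub, hg, hg₀, sub_self]
    · intro g hg
      simp only [Finset.mem_filter, Finset.mem_univ, true_and] at hg ⊢
      rw [QuotientAddGroup.mk_add, (QuotientAddGroup.eq_zero_iff g).mpr hg, zero_add, hg₀]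
    · intro g _; simp
    · intro g _; simp
  rw [h0, ← Fintype.card_subtype, ← Nat.card_eq_fintype_card]
  exact hH

lemma count_sum_eq [Fintype G] (H : AddSubgroup G) (t : ℕ) (hH : Nat.card H = t)
    (S : Finset (G × G)) (f f' : G × G → G)
    (hcount : ∀ g : G, (S.val.bind fun p => ({f p, f' p} : Multiset G)).count g
        = if g ∈ H then 0 else 1)
    (z : G ⧸ H) (hz : z ≠ 0) :
    ∑ p ∈ S, ((if ((f p : G) : G ⧸ H) = z then 1 else 0)
      + (if ((f' p : G) : G ⧸ H) = z then 1 else 0)) = t := by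
  set F := Finset.univ.filter fun g : G => (g : G ⧸ H) = z with hF
  have hmemF : ∀ g : G, g ∈ F ↔ (g : G ⧸ H) = z := by
    intro g; simp [hF]
  calc ∑ p ∈ S, ((if ((f p : G) : G ⧸ H) = z then 1 else 0)
        + (if ((f' p : G) : G ⧸ H) = z then 1 else 0))
      = ∑ p ∈ S, ∑ g ∈ F, (({f p, f' p} : Multiset G).count g) := by
        apply Finset.sum_congr rfl
        intro p _
        have h1 : ∀ x : G, (∑ g ∈ F, if g = x then 1 else 0) = if x ∈ F then 1 else 0 :=
          fun x => Finset.sum_ite_eq' F x (fun _ => 1)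
        have h2 : ∀ g : G, ({f p, f' p} : Multiset G).count g
            = (if g = f p then 1 else 0) + (if g = f' p then 1 else 0) := by
          intro g
          simp [Multiset.count_cons, Multiset.count_singleton, add_comm]
        simp only [h2, Finset.sum_add_distrib, h1, hmemF]
    _ = ∑ g ∈ F, ∑ p ∈ S, (({f p, f' p} : Multiset G).count g) := Finset.sum_comm
    _ = ∑ g ∈ F, (S.val.bind fun p => ({f p, f' p} : Multiset G)).count g := by
        apply Finset.sum_congr rfl
        intro g _
        rw [Multiset.count_bind]
        rfl
    _ = ∑ g ∈ F, 1 := by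
        apply Finset.sum_congr rfl
        intro g hg
        rw [hcount g, if_neg]
        intro hgH
        exact hz (((hmemF g).mp hg) ▸ (QuotientAddGroup.eq_zero_iff g).mpr hgH ▸ rfl)
    _ = F.card := by simp
    _ = t := fiber_card H t hH z

theorem stmt_15 [Fintype G] (H : AddSubgroup G) (t : ℕ) (ht : Odd t)
    (hG : Nat.card G = 5 * t) (hH : Nat.card H = t) :
    ¬ ∃ S : Finset (G × G), IsStrongFrameStarter H S := by
  rintro ⟨S, ⟨⟨hE, hD⟩, hsum, -⟩⟩
  have ht0 : t ≠ 0 := by rintro rfl; simp [Nat.odd_iff] at ht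
  -- the quotient has 5 elements
  have h5 : Nat.card (G ⧸ H) = 5 := by
    have := AddSubgroup.card_eq_card_quotient_mul_card_addSubgroup H
    rw [hG, hH] at this
    have h5t : 5 * t = Nat.card (G ⧸ H) * t := this
    exact (Nat.eq_of_mul_eq_mul_right (Nat.pos_of_ne_zero ht0) h5t.symm)
  have hfive : ∀ x : G ⧸ H, 5 • x = 0 := five_smul_zero' h5
  -- membership facts
  have hmemE : ∀ x : G, x ∈ starterElems S → x ∉ H := by
    intro x hx hxH
    have h1 := hE x
    rw [if_pos hxH] at h1
    have h2 := Multiset.count_pos.mpr hx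
    omega
  have hmemD : ∀ x : G, x ∈ starterDiffs S → x ∉ H := by
    intro x hx hxH
    have h1 := hD x
    rw [if_pos hxH] at h1
    have h2 := Multiset.count_pos.mpr hx
    omega
  -- per-pair facts in the quotient
  have hfacts : ∀ p ∈ S, ((p.1 : G ⧸ H) ≠ 0) ∧ ((p.2 : G ⧸ H) ≠ 0)
      ∧ ((p.2 : G ⧸ H) ≠ (p.1 : G ⧸ H)) ∧ ((p.2 : G ⧸ H) ≠ -(p.1 : G ⧸ H)) := by
    intro p hp
    have hp1 : p.1 ∉ H := hmemE p.1 (Multiset.mem_bind.mpr ⟨p, hp, by simp⟩)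
    have hp2 : p.2 ∉ H := hmemE p.2 (Multiset.mem_bind.mpr ⟨p, hp, by simp⟩)
    have hpd : p.1 - p.2 ∉ H := hmemD _ (Multiset.mem_bind.mpr ⟨p, hp, by simp⟩)
    have hps : p.1 + p.2 ∉ H := hsum p hp
    refine ⟨?_, ?_, ?_, ?_⟩
    · rw [Ne, QuotientAddGroup.eq_zero_iff]; exact hp1
    · rw [Ne, QuotientAddGroup.eq_zero_iff]; exact hp2
    · intro h
      apply hpd
      rw [← QuotientAddGroup.eq_zero_iff, QuotientAddGroup.mk_sub, h, sub_self]
    · intro h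
      apply hps
      rw [← QuotientAddGroup.eq_zero_iff, QuotientAddGroup.mk_add, h]
      abel
  -- the class of a pair
  set cl : G × G → G ⧸ H := fun p =>
    if (p.2 : G ⧸ H) = 2 • (p.1 : G ⧸ H) then (p.1 : G ⧸ H) else (p.2 : G ⧸ H) with hcl
  have hclass : ∀ p ∈ S,
      ((p.1 : G ⧸ H) = cl p ∧ (p.2 : G ⧸ H) = 2 • cl p) ∨
      ((p.2 : G ⧸ H) = cl p ∧ (p.1 : G ⧸ H) = 2 • cl p) := by
    intro p hp
    obtain ⟨h1, h2, h3, h4⟩ := hfacts p hp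
    by_cases hc : (p.2 : G ⧸ H) = 2 • (p.1 : G ⧸ H)
    · left
      constructor
      · simp [hcl, hc]
      · simp only [hcl, if_pos hc]; exact hc
    · right
      rcases five_cases h5 h1 h2 h3 h4 with h | h
      · exact absurd h hc
      constructor
      · simp [hcl, hc]
      · simp only [hcl, if_neg hc]; exact h
  have hcl0 : ∀ p ∈ S, cl p ≠ 0 := by
    intro p hp
    obtain ⟨h1, h2, -, -⟩ := hfacts p hp
    rcases hclass p hp with ⟨ha, -⟩ | ⟨ha, -⟩
    · exact ha ▸ h1
    · exact ha ▸ h2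
  set N : G ⧸ H → ℕ := fun c => (S.filter fun p => cl p = c).card with hN
  have hNsum : ∀ c : G ⧸ H, N c = ∑ p ∈ S, (if cl p = c then 1 else 0) := by
    intro c
    rw [hN]
    exact Finset.card_filter _ _
  -- element-count equation
  have keyE : ∀ z : G ⧸ H, z ≠ 0 → N z + N (3 • z) = t := by
    intro z hz
    have h0 := count_sum_eq H t hH S Prod.fst Prod.snd hE z hz
    rw [← h0, hNsum, hNsum, ← Finset.sum_add_distrib]
    apply Finset.sum_congr rfl
    intro p hp
    have hiff : (2 • cl p = z) ↔ (cl p = 3 • z) := two_smul_eq_iff hfive _ _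
    rcases hclass p hp with ⟨h1, h2⟩ | ⟨h1, h2⟩
    · rw [h1, h2, if_congr hiff rfl rfl]
    · rw [h1, h2, if_congr hiff rfl rfl, add_comm]
  -- difference-count equation
  have keyD : ∀ z : G ⧸ H, z ≠ 0 → N z + N (-z) = t := by
    intro z hz
    have h0 := count_sum_eq H t hH S (fun p => p.1 - p.2) (fun p => p.2 - p.1) hD z hz
    rw [← h0, hNsum, hNsum, ← Finset.sum_add_distrib]
    apply Finset.sum_congr rfl
    intro p hp
    have hiff : (-(cl p) = z) ↔ (cl p = -z) := neg_eq_iff_eq_neg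
    rcases hclass p hp with ⟨h1, h2⟩ | ⟨h1, h2⟩
    · simp only [QuotientAddGroup.mk_sub, h1, h2, neg_smul_two, smul_two_sub]
      rw [if_congr hiff rfl rfl, add_comm]
    · simp only [QuotientAddGroup.mk_sub, h1, h2, neg_smul_two, smul_two_sub]
      rw [if_congr hiff rfl rfl]
  -- a nonzero element of the quotient
  have hnt : Nontrivial (G ⧸ H) := by
    have hfin : Finite (G ⧸ H) := Nat.finite_of_card_ne_zero (by omega)
    exact Finite.one_lt_card_iff_nontrivial.mp (by omega)
  obtain ⟨g, hg⟩ := exists_ne (0 : G ⧸ H)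
  have h3g : (3 : ℕ) • g ≠ 0 := three_smul_ne hfive g hg
  have e1 := keyE g hg
  have e3 := keyE ((3 : ℕ) • g) h3g
  have d1 := keyD g hg
  rw [three_three_smul hfive g] at e3
  have heven : 2 * N ((3 : ℕ) • g) = t := by omega
  rcases ht with ⟨k, hk⟩
  omega
end

section
/- Suppose G is an abelian group of order 4t with a subgroup H of order t such that G/H is cyclic of order 4. Then there is no strong frame starter in G \ H. -/
open scoped Classical

variable {G : Type*} [AddCommGroup G]

theorem stmt_16 [Fintype G] (H : AddSubgroup G) (t : ℕ)
    (hG : Nat.card G = 4 * t) (hH : Nat.card H = t)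
    (hquot : Nonempty ((G ⧸ H) ≃+ ZMod 4)) :
    ¬ ∃ S : Finset (G × G), IsStrongFrameStarter H S := by
  rintro ⟨S, ⟨⟨helem, hdiff⟩, hsum, -⟩⟩
  obtain ⟨e⟩ := hquot
  set f : G →+ ZMod 4 := e.toAddMonoidHom.comp (QuotientAddGroup.mk' H) with hf
  have hker : ∀ x : G, f x = 0 ↔ x ∈ H := by
    intro x
    simp [hf, QuotientAddGroup.mk'_apply, EmbeddingLike.map_eq_zero_iff,
      QuotientAddGroup.eq_zero_iff]
  have hsurj : Function.Surjective f :=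
    e.surjective.comp (QuotientAddGroup.mk'_surjective H)
  obtain ⟨z, hz⟩ := hsurj 2
  have hzH : z ∉ H := fun h => by
    have := (hker z).mpr h; rw [hz] at this; exact absurd this (by decide)
  have hzmem : z ∈ starterDiffs S := by
    have := hdiff z
    rw [if_neg hzH] at this
    exact Multiset.count_pos.mp (by omega)
  rw [starterDiffs, Multiset.mem_bind] at hzmem
  obtain ⟨p, hpS, hzp⟩ := hzmem
  have hpS' : p ∈ S := hpS
  -- p.1 and p.2 are not in H
  have h1 : p.1 ∉ H := by
    intro h
    have hmem : p.1 ∈ starterElems S := by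
      rw [starterElems, Multiset.mem_bind]
      exact ⟨p, hpS, by simp⟩
    have := helem p.1
    rw [if_pos h] at this
    exact absurd (Multiset.count_pos.mpr hmem) (by omega)
  have h2 : p.2 ∉ H := by
    intro h
    have hmem : p.2 ∈ starterElems S := by
      rw [starterElems, Multiset.mem_bind]
      exact ⟨p, hpS, by simp⟩
    have := helem p.2
    rw [if_pos h] at this
    exact absurd (Multiset.count_pos.mpr hmem) (by omega)
  have hsum' : p.1 + p.2 ∉ H := hsum p hpS'
  have fa : f p.1 ≠ 0 := fun h => h1 ((hker _).mp h)
  have fb : f p.2 ≠ 0 := fun h => h2 ((hker _).mp h)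
  have fab : f p.1 + f p.2 ≠ 0 := fun h => hsum' ((hker _).mp (by rw [map_add]; exact h))
  have hdiff2 : f p.1 - f p.2 = 2 ∨ f p.2 - f p.1 = 2 := by
    simp only [Multiset.insert_eq_cons, Multiset.mem_cons, Multiset.mem_singleton] at hzp
    rcases hzp with h | h
    · left; rw [← map_sub, ← h, hz]
    · right; rw [← map_sub, ← h, hz]
  revert fa fb fab hdiff2
  generalize f p.1 = a
  generalize f p.2 = b
  revert a b
  decide
end

section
/- Suppose G is an abelian group of order 6t with a subgroup H of order t (so G/H is cyclic of order 6). Then there is no strong frame starter in G \ H. -/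
open scoped Classical

variable {G : Type*} [AddCommGroup G]

namespace StrongFrameAux

/-- Weight on cosets used for the element count. -/
def w : ZMod 6 → ℤ := fun c => if c = 2 ∨ c = 4 then 2 else 0

/-- Weight on cosets used for the difference count. -/
def v : ZMod 6 → ℤ := fun c => if c = 1 ∨ c = 3 ∨ c = 5 then -1 else 0

lemma key : ∀ x y : ZMod 6, x ≠ 0 → y ≠ 0 → x - y ≠ 0 → x + y ≠ 0 →
    (w x + w y) + (v (x - y) + v (y - x)) = 0 := by decide

lemma wv_sum : ∑ c : ZMod 6, (w c + v c) = 1 := by decide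

lemma wv_zero : w 0 + v 0 = 0 := by decide

end StrongFrameAux

open StrongFrameAux in
theorem stmt_17 [Fintype G] (H : AddSubgroup G) (t : ℕ)
    (hG : Nat.card G = 6 * t) (hH : Nat.card H = t) :
    ¬ ∃ S : Finset (G × G), IsStrongFrameStarter H S := by
  rintro ⟨S, ⟨⟨helem, hdiff⟩, hsum, -⟩⟩
  have htpos : 0 < t := by
    by_contra h
    have h0 : t = 0 := by omega
    have : 0 < Nat.card G := Nat.card_pos
    omega
  -- the quotient is a cyclic group of order 6
  have hQcard : Nat.card (G ⧸ H) = 6 := by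
    have h := AddSubgroup.card_eq_card_quotient_mul_card_addSubgroup H
    rw [hG, hH] at h
    have := Nat.eq_of_mul_eq_mul_right htpos h.symm
    omega
  have hQfin : Finite (G ⧸ H) := Nat.finite_of_card_ne_zero (by omega)
  have hQfintype : Fintype (G ⧸ H) := Fintype.ofFinite _
  have hc : IsAddCyclic (G ⧸ H) := by
    obtain ⟨a, ha⟩ := exists_prime_addOrderOf_dvd_card (G := G ⧸ H) 2
      (by rw [← Nat.card_eq_fintype_card, hQcard]; norm_num)
    obtain ⟨b, hb⟩ := exists_prime_addOrderOf_dvd_card (G := G ⧸ H) 3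
      (by rw [← Nat.card_eq_fintype_card, hQcard]; norm_num)
    have hco : Nat.Coprime (addOrderOf a) (addOrderOf b) := by rw [ha, hb]; decide
    have h6 : addOrderOf (a + b) = 6 := by
      rw [(AddCommute.all a b).addOrderOf_add_eq_mul_addOrderOf_of_coprime hco, ha, hb]
    exact isAddCyclic_of_addOrderOf_eq_card (a + b) (by rw [h6, hQcard])
  have ψ : ZMod 6 ≃+ (G ⧸ H) := hQcard ▸ zmodAddCyclicAddEquiv hc
  set φ : G →+ ZMod 6 :=
    ψ.symm.toAddMonoidHom.comp (QuotientAddGroup.mk' H) with hφdef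
  have hker : ∀ x : G, φ x = 0 ↔ x ∈ H := by
    intro x
    have : φ x = ψ.symm ((QuotientAddGroup.mk' H) x) := rfl
    rw [this, AddEquiv.map_eq_zero_iff, QuotientAddGroup.mk'_apply,
      QuotientAddGroup.eq_zero_iff]
  have hsurj : Function.Surjective φ :=
    ψ.symm.surjective.comp (QuotientAddGroup.mk'_surjective H)
  -- each fiber of φ has exactly t elements
  have hHcard : (Finset.univ.filter (fun z : G => z ∈ H)).card = t := by
    rw [← Fintype.card_subtype, ← Nat.card_eq_fintype_card]
    exact hH
  have hfiber : ∀ c : ZMod 6, (Finset.univ.filter (fun z : G => φ z = c)).card = t := by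
    intro c
    obtain ⟨z0, hz0⟩ := hsurj c
    rw [← hHcard]
    apply Finset.card_bij (fun z _ => z - z0)
    · intro a ha
      simp only [Finset.mem_filter, Finset.mem_univ, true_and] at ha ⊢
      rw [← hker, map_sub, ha, hz0, sub_self]
    · intro a ha b hb hab
      exact sub_left_injective hab
    · intro b hb
      simp only [Finset.mem_filter, Finset.mem_univ, true_and] at hb
      refine ⟨z0 + b, ?_, by abel⟩
      simp only [Finset.mem_filter, Finset.mem_univ, true_and, map_add, hz0]
      rw [(hker b).2 hb, add_zero]
  -- members of S avoid H in all the required ways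
  have hmem : ∀ p ∈ S.val, p.1 ∉ H ∧ p.2 ∉ H ∧ p.1 - p.2 ∉ H ∧ p.1 + p.2 ∉ H := by
    intro p hp
    have h1 : p.1 ∈ starterElems S := Multiset.mem_bind.2 ⟨p, hp, by simp⟩
    have h2 : p.2 ∈ starterElems S := Multiset.mem_bind.2 ⟨p, hp, by simp⟩
    have h3 : p.1 - p.2 ∈ starterDiffs S := Multiset.mem_bind.2 ⟨p, hp, by simp⟩
    refine ⟨?_, ?_, ?_, hsum p hp⟩
    · intro h
      have := helem p.1
      rw [if_pos h] at this
      exact (Multiset.count_ne_zero.mpr h1) this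
    · intro h
      have := helem p.2
      rw [if_pos h] at this
      exact (Multiset.count_ne_zero.mpr h2) this
    · intro h
      have := hdiff (p.1 - p.2)
      rw [if_pos h] at this
      exact (Multiset.count_ne_zero.mpr h3) this
  -- summing a function vanishing on H against such a multiset
  have hmsum : ∀ (M : Multiset G) (f : G → ℤ),
      (∀ z, M.count z = if z ∈ H then 0 else 1) → (∀ z ∈ H, f z = 0) →
      (M.map f).sum = ∑ z : G, f z := by
    intro M f hcount hf
    rw [Finset.sum_multiset_map_count]
    rw [Finset.sum_subset (Finset.subset_univ M.toFinset) (by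
      intro z _ hz
      rw [Multiset.mem_toFinset] at hz
      rw [Multiset.count_eq_zero_of_notMem hz, zero_smul])]
    apply Finset.sum_congr rfl
    intro z _
    rw [hcount z]
    split_ifs with h
    · rw [hf z h, smul_zero]
    · rw [one_smul]
  -- the total weighted sum, computed via the counts
  have hElems : ((starterElems S).map (fun z => w (φ z))).sum = ∑ z : G, w (φ z) := by
    apply hmsum _ _ helem
    intro z hz
    rw [(hker z).2 hz]
    decide
  have hDiffs : ((starterDiffs S).map (fun z => v (φ z))).sum = ∑ z : G, v (φ z) := by
    apply hmsum _ _ hdiff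
    intro z hz
    rw [(hker z).2 hz]
    decide
  -- the total weighted sum, computed pairwise, vanishes
  have hzero : ((starterElems S).map (fun z => w (φ z))).sum
      + ((starterDiffs S).map (fun z => v (φ z))).sum = 0 := by
    rw [starterElems, starterDiffs, Multiset.map_bind, Multiset.map_bind,
      Multiset.sum_bind, Multiset.sum_bind, ← Multiset.sum_map_add]
    apply Multiset.sum_eq_zero
    intro x hx
    rw [Multiset.mem_map] at hx
    obtain ⟨p, hp, rfl⟩ := hx
    obtain ⟨h1, h2, h3, h4⟩ := hmem p hp
    simp only [Multiset.map_cons, Multiset.map_singleton, Multiset.sum_cons,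
      Multiset.sum_singleton, Multiset.insert_eq_cons]
    have e1 : φ p.1 ≠ 0 := fun h => h1 ((hker p.1).1 h)
    have e2 : φ p.2 ≠ 0 := fun h => h2 ((hker p.2).1 h)
    have e3 : φ p.1 - φ p.2 ≠ 0 := by
      rw [← map_sub]; exact fun h => h3 ((hker _).1 h)
    have e4 : φ p.1 + φ p.2 ≠ 0 := by
      rw [← map_add]; exact fun h => h4 ((hker _).1 h)
    have := key (φ p.1) (φ p.2) e1 e2 e3 e4
    rw [map_sub, map_sub]
    linarith [this]
  -- but the count computation gives the value t
  have hval : (∑ z : G, w (φ z)) + (∑ z : G, v (φ z)) = (t : ℤ) := by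
    rw [← Finset.sum_add_distrib]
    have : ∑ z : G, (w (φ z) + v (φ z)) = ∑ c ∈ Finset.univ.image φ,
        (Finset.univ.filter (fun z : G => φ z = c)).card • (w c + v c) :=
      Finset.sum_comp (fun c => w c + v c) φ
    rw [this, Finset.image_univ_of_surjective hsurj]
    have : ∀ c ∈ (Finset.univ : Finset (ZMod 6)),
        (Finset.univ.filter (fun z : G => φ z = c)).card • (w c + v c)
          = t • (w c + v c) := by
      intro c _
      rw [hfiber c]
    rw [Finset.sum_congr rfl this, ← Finset.smul_sum, wv_sum]
    simp
  rw [hElems, hDiffs, hval] at hzero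
  exact absurd (by exact_mod_cast hzero) (by omega)
end

section
/- There is no strong starter in ℤ₉: no set of 4 pairs partitioning ℤ₉ \ {0} with differences ±(x-y) enumerating ℤ₉ \ {0} exactly once can have pairwise distinct nonzero sums x + y. -/
open scoped Classical

variable {G : Type*} [AddCommGroup G]

lemma count_irrel {α : Type*} (D1 D2 : DecidableEq α) (a : α) (m : Multiset α) :
    @Multiset.count α D1 a m = @Multiset.count α D2 a m := by
  rw [Subsingleton.elim D1 D2]

theorem key9 : ∀ s1 s2 s3 s4 : ZMod 9,
    s1 ≠ 0 → s2 ≠ 0 → s3 ≠ 0 → s4 ≠ 0 →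
    s1 ≠ s2 → s1 ≠ s3 → s1 ≠ s4 → s2 ≠ s3 → s2 ≠ s4 → s3 ≠ s4 →
    ∃ z : ZMod 9,
      Multiset.count z ({s1+1, s1-1, s2+2, s2-2, s3+3, s3-3, s4+4, s4-4} : Multiset (ZMod 9))
        ≠ if z = 0 then 0 else 1 := by decide

lemma exists_pair_diff {D : DecidableEq (ZMod 9)} (S : Finset (ZMod 9 × ZMod 9))
    (hd : ∀ z : ZMod 9, @Multiset.count _ D z (starterDiffs S)
        = if z ∈ (⊥ : AddSubgroup (ZMod 9)) then 0 else 1)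
    (v : ZMod 9) (hv : v ≠ 0) :
    ∃ p ∈ S, p.1 - p.2 = v ∨ p.1 - p.2 = -v := by
  have h := hd v
  rw [if_neg (by simpa [AddSubgroup.mem_bot] using hv)] at h
  have hmem : v ∈ starterDiffs S := by
    rw [← @Multiset.count_pos _ D, h]; norm_num
  rw [starterDiffs, Multiset.mem_bind] at hmem
  obtain ⟨p, hp, hpv⟩ := hmem
  refine ⟨p, hp, ?_⟩
  simp only [Multiset.insert_eq_cons, Multiset.mem_cons, Multiset.mem_singleton] at hpv
  rcases hpv with h1 | h2
  · exact Or.inl h1.symm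
  · right; rw [h2]; ring

theorem stmt_19 :
    ¬ ∃ S : Finset (ZMod 9 × ZMod 9), S.card = 4 ∧
      IsStrongFrameStarter (⊥ : AddSubgroup (ZMod 9)) S := by
  rintro ⟨S, hcard, ⟨⟨helems, hdiffs⟩, hnz, hinj⟩⟩
  obtain ⟨p1, hp1S, hp1⟩ := exists_pair_diff S hdiffs 1 (by decide)
  obtain ⟨p2, hp2S, hp2⟩ := exists_pair_diff S hdiffs 2 (by decide)
  obtain ⟨p3, hp3S, hp3⟩ := exists_pair_diff S hdiffs 3 (by decide)
  obtain ⟨p4, hp4S, hp4⟩ := exists_pair_diff S hdiffs 4 (by decide)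
  -- the four pairs are distinct
  have hne12 : p1 ≠ p2 := by
    rintro rfl; rcases hp1 with h | h <;> rcases hp2 with h' | h' <;>
      rw [h] at h' <;> exact absurd h' (by decide)
  have hne13 : p1 ≠ p3 := by
    rintro rfl; rcases hp1 with h | h <;> rcases hp3 with h' | h' <;>
      rw [h] at h' <;> exact absurd h' (by decide)
  have hne14 : p1 ≠ p4 := by
    rintro rfl; rcases hp1 with h | h <;> rcases hp4 with h' | h' <;>
      rw [h] at h' <;> exact absurd h' (by decide)
  have hne23 : p2 ≠ p3 := by
    rintro rfl; rcases hp2 with h | h <;> rcases hp3 with h' | h' <;>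
      rw [h] at h' <;> exact absurd h' (by decide)
  have hne24 : p2 ≠ p4 := by
    rintro rfl; rcases hp2 with h | h <;> rcases hp4 with h' | h' <;>
      rw [h] at h' <;> exact absurd h' (by decide)
  have hne34 : p3 ≠ p4 := by
    rintro rfl; rcases hp3 with h | h <;> rcases hp4 with h' | h' <;>
      rw [h] at h' <;> exact absurd h' (by decide)
  -- S = {p1, p2, p3, p4}
  have hTcard : ({p1, p2, p3, p4} : Finset (ZMod 9 × ZMod 9)).card = 4 := by
    rw [Finset.card_insert_of_notMem (by simp [hne12, hne13, hne14]),
      Finset.card_insert_of_notMem (by simp [hne23, hne24]),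
      Finset.card_insert_of_notMem (by simp [hne34]), Finset.card_singleton]
  have hT : ({p1, p2, p3, p4} : Finset (ZMod 9 × ZMod 9)) = S := by
    apply Finset.eq_of_subset_of_card_le
    · intro x hx
      simp only [Finset.mem_insert, Finset.mem_singleton] at hx
      rcases hx with rfl | rfl | rfl | rfl <;> assumption
    · rw [hcard, hTcard]
  -- multiset value of S
  have hval : S.val = {p1, p2, p3, p4} := by
    rw [← hT]
    rw [Finset.insert_val_of_notMem (by simp [hne12, hne13, hne14]),
      Finset.insert_val_of_notMem (by simp [hne23, hne24]),
      Finset.insert_val_of_notMem (by simp [hne34])]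
    rfl
  -- sums
  set s1 := p1.1 + p1.2 with hs1
  set s2 := p2.1 + p2.2 with hs2
  set s3 := p3.1 + p3.2 with hs3
  set s4 := p4.1 + p4.2 with hs4
  have hnz' : ∀ p ∈ S, p.1 + p.2 ≠ 0 := by
    intro p hp
    have := hnz p hp
    simpa [AddSubgroup.mem_bot] using this
  have hsne : ∀ p ∈ S, ∀ q ∈ S, p ≠ q → p.1 + p.2 ≠ q.1 + q.2 := by
    intro p hp q hq hne heq
    exact hne (hinj p hp q hq heq)
  obtain ⟨z, hz⟩ := key9 s1 s2 s3 s4 (hnz' p1 hp1S) (hnz' p2 hp2S) (hnz' p3 hp3S)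
    (hnz' p4 hp4S) (hsne p1 hp1S p2 hp2S hne12) (hsne p1 hp1S p3 hp3S hne13)
    (hsne p1 hp1S p4 hp4S hne14) (hsne p2 hp2S p3 hp3S hne23)
    (hsne p2 hp2S p4 hp4S hne24) (hsne p3 hp3S p4 hp4S hne34)
  apply hz
  have hpair : ∀ (p : ZMod 9 × ZMod 9) (v : ZMod 9),
      (p.1 - p.2 = v ∨ p.1 - p.2 = -v) →
      ({p.1 + p.2 + v, p.1 + p.2 - v} : Multiset (ZMod 9))
        = {2 * p.1, 2 * p.2} := by
    rintro p v (h | h)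
    · rw [← h]
      congr 1 <;> ring_nf
    · have hv : v = p.2 - p.1 := by linear_combination h
      rw [hv]
      have e1 : p.1 + p.2 + (p.2 - p.1) = 2 * p.2 := by ring
      have e2 : p.1 + p.2 - (p.2 - p.1) = 2 * p.1 := by ring
      rw [e1, e2]
      exact Multiset.pair_comm _ _
  have hsplit : ({s1+1, s1-1, s2+2, s2-2, s3+3, s3-3, s4+4, s4-4} : Multiset (ZMod 9))
      = ({s1+1, s1-1} : Multiset (ZMod 9)) + ({s2+2, s2-2} + ({s3+3, s3-3} + {s4+4, s4-4})) := rfl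
  have hM : ({s1+1, s1-1, s2+2, s2-2, s3+3, s3-3, s4+4, s4-4} : Multiset (ZMod 9))
      = Multiset.map (fun a => 2 * a) (starterElems S) := by
    rw [hsplit, hpair p1 1 hp1, hpair p2 2 hp2, hpair p3 3 hp3, hpair p4 4 hp4,
      starterElems, hval]
    simp only [Multiset.insert_eq_cons, Multiset.cons_bind, Multiset.singleton_bind,
      Multiset.map_add, Multiset.map_cons, Multiset.map_singleton]
  rw [hM]
  have hinj2 : Function.Injective (fun a : ZMod 9 => 2 * a) := by decide
  have hz5 : z = 2 * (5 * z) := by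
    have h25 : (2 : ZMod 9) * 5 = 1 := by decide
    rw [← mul_assoc, h25, one_mul]
  rw [hz5, Multiset.count_map_eq_count' _ _ hinj2]
  refine (count_irrel _ _ _ _).trans ((helems (5 * z)).trans ?_)
  have hiff : ((5:ZMod 9) * z ∈ (⊥ : AddSubgroup (ZMod 9))) ↔ (2 * ((5:ZMod 9) * z) = 0) := by
    rw [AddSubgroup.mem_bot]
    constructor
    · intro h; rw [h, mul_zero]
    · intro h
      rw [← hz5] at h
      rw [h, mul_zero]
  rw [if_congr hiff rfl rfl]
end
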